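/- arXiv:1604.05464 — 9 statements merged into one kernel-verified Lean document; each statement's English description precedes it below -/
import Mathlib

section
/- For independent exponential random variables B_1,...,B_i with rates μ_1,...,μ_i > 0, let B_1^j := B_1 + ... + B_j and let f_{B_1^j} denote the probability density of B_1^j. Then for all x ≥ 0, P{B_1^i > x} = Σ_{j=1}^i (1/μ_j) f_{B_1^j}(x). -/
open MeasureTheory ProbabilityTheory Set

/-!
Let `F_k` be the distribution function of `B_1^k`, with `F_0 = 1` on `[0, ∞)`. Since
`B_1^{k+1} = B_1^k + B_{k+1}` with `B_{k+1} ~ Exp(μ_{k+1})` independent of `B_1^k`,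
`F_{k+1}(t) = E[1 - exp(-μ_{k+1} (t - B_1^k)⁺)]`, and differentiating under the expectation
(Fubini) gives `F_{k+1}' = μ_{k+1} (F_k - F_{k+1})`. Hence
`(1/μ_{k+1}) f_{B_1^{k+1}}(x) = F_k(x) - F_{k+1}(x)`, and the sum over `k` telescopes to
`F_0(x) - F_i(x) = P{B_1^i > x}`. Distribution functions are right-continuous, so only right
derivatives are needed and the density has to be continuous at `x` from the right only.
-/

lemma integrable_cdf_const_sub (κ ν : Measure ℝ) [IsFiniteMeasure ν] (t : ℝ) :
    Integrable (fun s => cdf κ (t - s)) ν :=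
  .of_bound ((monotone_cdf κ).measurable.comp (by fun_prop)).aestronglyMeasurable 1
    (ae_of_all _ fun s => by rw [Real.norm_of_nonneg (cdf_nonneg κ _)]; exact cdf_le_one κ _)

lemma cdf_conv (ν κ : Measure ℝ) [IsProbabilityMeasure ν] [IsProbabilityMeasure κ] (t : ℝ) :
    cdf (ν ∗ κ) t = ∫ s, cdf κ (t - s) ∂ν := by
  rw [← ENNReal.ofReal_eq_ofReal_iff (cdf_nonneg _ _) (integral_nonneg fun s => cdf_nonneg κ _),
    ofReal_cdf, ofReal_integral_eq_lintegral_ofReal (integrable_cdf_const_sub κ ν t)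
      (ae_of_all _ fun s => cdf_nonneg κ _),
    ← lintegral_indicator_one measurableSet_Iic,
    Measure.lintegral_conv (measurable_one.indicator measurableSet_Iic)]
  refine lintegral_congr fun s => ?_
  rw [ofReal_cdf, ← lintegral_indicator_one measurableSet_Iic]
  congr with u
  simp only [indicator, mem_Iic, Pi.one_apply, le_sub_iff_add_le']

section Density

variable {κ : Measure ℝ} {g : ℝ → ℝ}

lemma integrableOn_Iic_of_cdf_eq_setIntegral (hg : ∀ a, cdf κ a = ∫ t in Iic a, g t) (a : ℝ) :
    IntegrableOn g (Iic a) := by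
  by_contra hna
  have hzero : ∀ᶠ b in Filter.atTop, cdf κ b = 0 := by
    filter_upwards [Filter.eventually_ge_atTop a] with b hb
    rw [hg]
    exact integral_undef fun hb' => hna (IntegrableOn.mono_set hb' (Iic_subset_Iic.mpr hb))
  have h10 := tendsto_nhds_unique (tendsto_cdf_atTop κ)
    (tendsto_const_nhds.congr' (hzero.mono fun _ hb => hb.symm))
  norm_num at h10

lemma cdf_sub_cdf_eq_intervalIntegral (hg : ∀ a, cdf κ a = ∫ t in Iic a, g t) (a b : ℝ) :
    cdf κ b - cdf κ a = ∫ t in a..b, g t := by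
  rw [hg, hg, intervalIntegral.integral_Iic_sub_Iic (integrableOn_Iic_of_cdf_eq_setIntegral hg a)
    (integrableOn_Iic_of_cdf_eq_setIntegral hg b)]

open Topology in
lemma hasDerivWithinAt_Ici_of_sub_eq_intervalIntegral {F g : ℝ → ℝ} {x : ℝ}
    (hF : ∀ b, F b - F x = ∫ t in x..b, g t) (hg : IntervalIntegrable g volume x (x + 1))
    (hc : ContinuousWithinAt g (Ioi x) x) : HasDerivWithinAt F (g x) (Ici x) x := by
  have hmeas : StronglyMeasurableAtFilter g (𝓝[>] x) :=
    ⟨Ioc x (x + 1), Ioc_mem_nhdsGT (by linarith), hg.1.aestronglyMeasurable⟩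
  have hF' : F = fun b => F x + ∫ t in x..b, g t := funext fun b => by rw [← hF b]; ring
  rw [hF']
  exact (intervalIntegral.integral_hasDerivWithinAt_right IntervalIntegrable.refl hmeas hc
    ).const_add (F x)

lemma hasDerivWithinAt_cdf_of_eq_setIntegral (hg : ∀ a, cdf κ a = ∫ t in Iic a, g t) {x : ℝ}
    (hc : ContinuousWithinAt g (Ioi x) x) : HasDerivWithinAt (cdf κ) (g x) (Ici x) x := by
  refine hasDerivWithinAt_Ici_of_sub_eq_intervalIntegral
    (cdf_sub_cdf_eq_intervalIntegral hg x) ?_ hc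
  refine ((integrableOn_Iic_of_cdf_eq_setIntegral hg (x + 1)).mono_set ?_).intervalIntegrable
  rw [uIcc_of_le (by linarith)]
  exact Icc_subset_Iic_self

end Density

section Exponential

variable {r : ℝ} (hr : 0 < r)
include hr

lemma exponentialPDFReal_eq_mul_indicator_sub_cdf (u : ℝ) :
    exponentialPDFReal r u = r * ((Ici 0).indicator 1 u - cdf (expMeasure r) u) := by
  rw [cdf_expMeasure_eq hr]
  by_cases hu : 0 ≤ u <;> simp [exponentialPDFReal, gammaPDFReal, hu]

lemma abs_exponentialPDFReal_le (u : ℝ) : |exponentialPDFReal r u| ≤ r := by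
  have := isProbabilityMeasure_expMeasure hr
  rw [abs_of_nonneg (exponentialPDFReal_nonneg hr u),
    exponentialPDFReal_eq_mul_indicator_sub_cdf hr]
  have : (Ici (0 : ℝ)).indicator 1 u ≤ (1 : ℝ) := indicator_le_self' (fun _ _ => zero_le_one) u
  nlinarith [cdf_nonneg (expMeasure r) u]

variable (ν : Measure ℝ) [IsProbabilityMeasure ν]

lemma mul_cdf_sub_cdf_conv_expMeasure (t : ℝ) :
    r * (cdf ν t - cdf (ν ∗ expMeasure r) t) = ∫ s, exponentialPDFReal r (t - s) ∂ν := by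
  have := isProbabilityMeasure_expMeasure hr
  rw [cdf_conv, cdf_eq_real, ← integral_indicator_one measurableSet_Iic, ← integral_sub,
    ← integral_const_mul]
  · congr with s
    rw [exponentialPDFReal_eq_mul_indicator_sub_cdf hr]
    simp [indicator]
  · exact (integrable_const 1).indicator measurableSet_Iic
  · exact integrable_cdf_const_sub _ ν t

lemma cdf_conv_expMeasure_sub_cdf_eq_intervalIntegral (a b : ℝ) :
    cdf (ν ∗ expMeasure r) b - cdf (ν ∗ expMeasure r) a
      = ∫ t in a..b, r * (cdf ν t - cdf (ν ∗ expMeasure r) t) := by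
  have := isProbabilityMeasure_expMeasure hr
  have : IsFiniteMeasure (volume.restrict (uIoc a b)) :=
    isFiniteMeasure_restrict.2 measure_Ioc_lt_top.ne
  have hint : Integrable (Function.uncurry fun t s => exponentialPDFReal r (t - s))
      ((volume.restrict (uIoc a b)).prod ν) :=
    .of_bound ((measurable_exponentialPDFReal r).comp (by fun_prop)).aestronglyMeasurable r
      (ae_of_all _ fun _ => abs_exponentialPDFReal_le hr _)
  have hshift (s : ℝ) : ∫ t in a..b, exponentialPDFReal r (t - s)
      = cdf (expMeasure r) (b - s) - cdf (expMeasure r) (a - s) := by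
    rw [intervalIntegral.integral_comp_sub_right,
      cdf_sub_cdf_eq_intervalIntegral (cdf_expMeasure_eq_integral hr)]
  calc cdf (ν ∗ expMeasure r) b - cdf (ν ∗ expMeasure r) a
      = ∫ s, (∫ t in a..b, exponentialPDFReal r (t - s)) ∂ν := by
        simp_rw [hshift, cdf_conv]
        rw [integral_sub (integrable_cdf_const_sub _ ν b) (integrable_cdf_const_sub _ ν a)]
    _ = ∫ t in a..b, ∫ s, exponentialPDFReal r (t - s) ∂ν := by
        simp_rw [intervalIntegral.intervalIntegral_eq_integral_uIoc, integral_smul,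
          integral_integral_swap hint]
    _ = ∫ t in a..b, r * (cdf ν t - cdf (ν ∗ expMeasure r) t) := by
        simp_rw [mul_cdf_sub_cdf_conv_expMeasure hr ν]

lemma hasDerivWithinAt_cdf_conv_expMeasure (x : ℝ) :
    HasDerivWithinAt (cdf (ν ∗ expMeasure r)) (r * (cdf ν x - cdf (ν ∗ expMeasure r) x))
      (Ici x) x := by
  refine hasDerivWithinAt_Ici_of_sub_eq_intervalIntegral
    (cdf_conv_expMeasure_sub_cdf_eq_intervalIntegral hr ν x)
    (((monotone_cdf ν).intervalIntegrable.sub (monotone_cdf _).intervalIntegrable).const_mul r) ?_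
  exact ((((cdf ν).right_continuous x).sub ((cdf _).right_continuous x)).const_mul r).mono
    Ioi_subset_Ici_self

variable {ν} in
lemma density_conv_expMeasure_eq {g : ℝ → ℝ}
    (hg : ∀ a, cdf (ν ∗ expMeasure r) a = ∫ t in Iic a, g t) {x : ℝ}
    (hc : ContinuousWithinAt g (Ioi x) x) :
    g x = r * (cdf ν x - cdf (ν ∗ expMeasure r) x) :=
  (uniqueDiffWithinAt_Ici x).eq_deriv _ (hasDerivWithinAt_cdf_of_eq_setIntegral hg hc)
    (hasDerivWithinAt_cdf_conv_expMeasure hr ν x)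

end Exponential

/-- `sumBelow B k` is the paper's `B_1^k` (the indices of `Fin n` start at `0`). -/
def sumBelow {M : Type*} [AddCommMonoid M] {n : ℕ} (B : Fin n → M) (k : ℕ) : M :=
  ∑ l ∈ Finset.univ.filter (fun l : Fin n => (l : ℕ) < k), B l

section SumBelow

variable {M : Type*} [AddCommMonoid M] {n : ℕ} (B : Fin n → M)

@[simp]
lemma sumBelow_zero : sumBelow B 0 = 0 := by
  simp [sumBelow]

lemma sumBelow_of_le {k : ℕ} (hk : n ≤ k) : sumBelow B k = ∑ l, B l := by
  rw [sumBelow, Finset.filter_true_of_mem fun l _ => l.isLt.trans_le hk]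

lemma sumBelow_succ (j : Fin n) : sumBelow B (j + 1) = sumBelow B j + B j := by
  have : Finset.univ.filter (fun l : Fin n => (l : ℕ) < j + 1)
      = insert j (Finset.univ.filter fun l : Fin n => (l : ℕ) < j) := by
    ext l
    simp only [Finset.mem_filter, Finset.mem_univ, true_and, Finset.mem_insert, Fin.ext_iff]
    omega
  rw [sumBelow, this, Finset.sum_insert (by simp), add_comm]
  rfl

lemma sum_ite_le_eq_sumBelow (j : Fin n) :
    ∑ l, (if l ≤ j then B l else 0) = sumBelow B (j + 1) := by
  rw [sumBelow, Finset.sum_filter]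
  simp only [Fin.le_iff_val_le_val, Nat.lt_succ_iff]

end SumBelow

section Independent

variable {Ω : Type*} [MeasurableSpace Ω] {P : Measure Ω} {n : ℕ} {B : Fin n → Ω → ℝ}

lemma measurable_sumBelow (hmB : ∀ l, Measurable (B l)) (k : ℕ) : Measurable (sumBelow B k) := by
  rw [sumBelow]
  fun_prop

lemma map_sumBelow_succ [IsProbabilityMeasure P] (hmB : ∀ l, Measurable (B l))
    (hindep : iIndepFun B P) (j : Fin n) :
    P.map (sumBelow B (j + 1)) = P.map (sumBelow B j) ∗ P.map (B j) := by
  rw [sumBelow_succ]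
  exact (hindep.indepFun_finsetSum_of_notMem hmB (by simp)).map_add_eq_map_conv_map
    (measurable_sumBelow hmB j) (hmB j)

end Independent

theorem hypoexp_tail_eq_sum_densities_general
    {Ω : Type*} [MeasurableSpace Ω] (P : Measure Ω) [IsProbabilityMeasure P]
    (i : ℕ) (μ : Fin i → ℝ) (hμ : ∀ l, 0 < μ l)
    (B : Fin i → Ω → ℝ) (hmB : ∀ l, Measurable (B l))
    (hindep : iIndepFun B P)
    (hdist : ∀ l, Measure.map (B l) P = expMeasure (μ l))
    (f : Fin i → ℝ → ℝ)
    (hf_cont : ∀ j, ContinuousOn (f j) (Set.Ici 0))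
    (hf_cdf : ∀ (j : Fin i) (a : ℝ),
      (P {ω | (∑ l : Fin i, if l ≤ j then B l ω else 0) ≤ a}).toReal
        = ∫ t in Set.Iic a, f j t)
    (x : ℝ) (hx : 0 ≤ x) :
    (P {ω | x < ∑ l : Fin i, B l ω}).toReal = ∑ j : Fin i, (1 / μ j) * f j x := by
  set ν : ℕ → Measure ℝ := fun k => P.map (sumBelow B k) with hν
  have hprob (k : ℕ) : IsProbabilityMeasure (ν k) :=
    Measure.isProbabilityMeasure_map (measurable_sumBelow hmB k).aemeasurable
  have hcdf (k : ℕ) (a : ℝ) : cdf (ν k) a = (P {ω | sumBelow B k ω ≤ a}).toReal := by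
    rw [cdf_eq_real, measureReal_def,
      Measure.map_apply (measurable_sumBelow hmB k) measurableSet_Iic]
    rfl
  have hstep (j : Fin i) : 1 / μ j * f j x = cdf (ν j) x - cdf (ν (j + 1)) x := by
    have hlaw : ν (j + 1) = ν j ∗ expMeasure (μ j) := by
      simp only [hν, map_sumBelow_succ hmB hindep, hdist]
    have hdens (a : ℝ) : cdf (ν j ∗ expMeasure (μ j)) a = ∫ t in Iic a, f j t := by
      rw [← hlaw, hcdf, ← hf_cdf j a, ← sum_ite_le_eq_sumBelow]
      simp only [Finset.sum_apply, ite_apply, Pi.zero_apply]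
    have hc : ContinuousWithinAt (f j) (Ioi x) x :=
      (hf_cont j x hx).mono (Ioi_subset_Ici_self.trans (Ici_subset_Ici.mpr hx))
    rw [density_conv_expMeasure_eq (hμ j) hdens hc, hlaw]
    field_simp [(hμ j).ne']
  have hfirst : cdf (ν 0) x = 1 := by
    simp [hcdf, hx]
  have hlast : (P {ω | x < ∑ l, B l ω}).toReal = 1 - cdf (ν i) x := by
    have hset : {ω | x < ∑ l, B l ω} = {ω | sumBelow B i ω ≤ x}ᶜ := by
      ext ω
      simp [sumBelow_of_le B le_rfl, Finset.sum_apply]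
    rw [hset, hcdf, ← measureReal_def, ← measureReal_def,
      probReal_compl_eq_one_sub (measurableSet_le (measurable_sumBelow hmB i) measurable_const)]
  rw [hlast, Finset.sum_congr rfl fun j _ => hstep j,
    Fin.sum_univ_eq_sum_range (fun k => cdf (ν k) x - cdf (ν (k + 1)) x), Finset.sum_range_sub',
    hfirst]

/-- For independent exponential random variables `B 1, ..., B i` with rates
`μ 1, ..., μ i > 0`, with `B_1^j` the partial sum and `f j` its probability density
(the continuous hypoexponential density, characterised by the CDF), for all `x ≥ 0`,
`P{B_1^i > x} = ∑_{j=1}^i (1/μ j) f j x`. -/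
theorem hypoexp_tail_eq_sum_densities
    {Ω : Type*} [MeasurableSpace Ω] (P : Measure Ω) [IsProbabilityMeasure P]
    (i : ℕ) (hi : 1 ≤ i) (μ : Fin i → ℝ) (hμ : ∀ l, 0 < μ l)
    (B : Fin i → Ω → ℝ) (hmB : ∀ l, Measurable (B l))
    (hindep : iIndepFun B P)
    (hdist : ∀ l, Measure.map (B l) P = expMeasure (μ l))
    (f : Fin i → ℝ → ℝ)
    (hf_cont : ∀ j, ContinuousOn (f j) (Set.Ici 0))
    (hf_cdf : ∀ (j : Fin i) (a : ℝ),
      (P {ω | (∑ l : Fin i, if l ≤ j then B l ω else 0) ≤ a}).toReal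
        = ∫ t in Set.Iic a, f j t)
    (x : ℝ) (hx : 0 ≤ x) :
    (P {ω | x < ∑ l : Fin i, B l ω}).toReal = ∑ j : Fin i, (1 / μ j) * f j x :=
  hypoexp_tail_eq_sum_densities_general P i μ hμ B hmB hindep hdist f hf_cont hf_cdf x hx
end

section
/- For independent exponentials B_1,...,B_i with rates μ_1,...,μ_i > 0 and partial sums B_1^j (with B_1^0 := 0), for all x ≥ 0: P{B_1^{i-1} ≤ x < B_1^i} = (1/μ_i) f_{B_1^i}(x), where f_{B_1^i} is the density of B_1^i. -/
/-!
Write `S = B_1^{i-1}`, `L = B_i ∼ Exp(r)` and `ν` for the law of `S`. By independence,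
`Q(a) := P(S ≤ a < S + L) = ∫_{s ≤ a} e^{-r(a-s)} dν(s)`, and since `L ≥ 0` a.s.,
`P(S + L ≤ a) = ν(-∞, a] - Q(a)`. For `y ↓ x` the increment `ν(x, y]` of the first term
cancels against the part of `Q(y) - Q(x)` coming from `(x, y]` up to
`O((y - x) ν(x, y]) = o(y - x)`, so the right derivative of `P(S + L ≤ ·)` at `x` is `r Q(x)`.
By the fundamental theorem of calculus it is also `f(x)`, since `f` is continuous on `[x, ∞)`.
-/

open MeasureTheory ProbabilityTheory Set Real Filter Topology Asymptotics

lemma expMeasure_Ioi {r : ℝ} (hr : 0 < r) {t : ℝ} (ht : 0 ≤ t) :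
    expMeasure r (Ioi t) = ENNReal.ofReal (exp (-(r * t))) := by
  have := isProbabilityMeasure_expMeasure hr
  rw [← compl_Iic, ← ofReal_measureReal, probReal_compl_eq_one_sub measurableSet_Iic,
    ← cdf_eq_real, cdf_expMeasure_eq hr, if_pos ht, sub_sub_cancel]

lemma ae_pos_expMeasure {r : ℝ} (hr : 0 < r) : ∀ᵐ t ∂expMeasure r, 0 < t := by
  have := isProbabilityMeasure_expMeasure hr
  rw [ae_iff, show {t : ℝ | ¬0 < t} = Iic 0 by ext; simp, ← ofReal_cdf, cdf_expMeasure_eq hr]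
  simp

/-- `P(S ≤ a < S + L)` for `S ∼ ν` independent of `L ∼ Exp(r)`. -/
noncomputable def expSurvivalConv (ν : Measure ℝ) (r a : ℝ) : ℝ :=
  ∫ s in Iic a, exp (-(r * (a - s))) ∂ν

section ExpSurvivalConv

variable {ν : Measure ℝ} {r : ℝ}

lemma integrableOn_exp_neg_mul_sub [IsFiniteMeasure ν] (hr : 0 ≤ r) (a : ℝ) :
    IntegrableOn (fun s => exp (-(r * (a - s)))) (Iic a) ν := by
  refine Measure.integrableOn_of_bounded (M := 1) (measure_ne_top _ _) (by fun_prop) ?_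
  refine (ae_restrict_iff' measurableSet_Iic).2 (.of_forall fun s hs => ?_)
  rw [norm_of_nonneg (exp_pos _).le, exp_le_one_iff, neg_nonpos]
  exact mul_nonneg hr (sub_nonneg.2 hs)

lemma expSurvivalConv_eq_add [IsFiniteMeasure ν] (hr : 0 ≤ r) {x y : ℝ} (hxy : x ≤ y) :
    expSurvivalConv ν r y = exp (-(r * (y - x))) * expSurvivalConv ν r x
      + ∫ s in Ioc x y, exp (-(r * (y - s))) ∂ν := by
  have hint := integrableOn_exp_neg_mul_sub (ν := ν) hr y
  rw [expSurvivalConv, expSurvivalConv, ← integral_const_mul, ← Iic_union_Ioc_eq_Iic hxy,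
    setIntegral_union (Iic_disjoint_Ioc le_rfl) measurableSet_Ioc
      (hint.mono_set (Iic_subset_Iic.2 hxy)) (hint.mono_set Ioc_subset_Iic_self)]
  congr 1
  refine setIntegral_congr_fun measurableSet_Iic fun s _ => ?_
  rw [← exp_add]
  ring_nf

/-- The quantity inside `|·|` is `∫_{(x,y]} (1 - e^{-r(y-s)}) dν(s)`. -/
lemma abs_cdf_sub_expSurvivalConv_increment_le [IsProbabilityMeasure ν] (hr : 0 ≤ r)
    {x y : ℝ} (hxy : x ≤ y) :
    |(cdf ν y - expSurvivalConv ν r y) - (cdf ν x - expSurvivalConv ν r x)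
        - (1 - exp (-(r * (y - x)))) * expSurvivalConv ν r x|
      ≤ r * (y - x) * (cdf ν y - cdf ν x) := by
  set I := ∫ s in Ioc x y, exp (-(r * (y - s))) ∂ν
  have hint : IntegrableOn (fun s => exp (-(r * (y - s)))) (Ioc x y) ν :=
    (integrableOn_exp_neg_mul_sub hr y).mono_set Ioc_subset_Iic_self
  have hcdf : cdf ν y - cdf ν x = ν.real (Ioc x y) := by
    rw [cdf_eq_real, cdf_eq_real, ← Iic_union_Ioc_eq_Iic hxy,
      measureReal_union (Iic_disjoint_Ioc le_rfl) measurableSet_Ioc]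
    ring
  have hI_le : I ≤ ν.real (Ioc x y) := by
    calc I ≤ ∫ _ in Ioc x y, (1 : ℝ) ∂ν :=
          setIntegral_mono_on hint (integrableOn_const (measure_ne_top _ _)) measurableSet_Ioc
            fun s hs => exp_le_one_iff.2 (neg_nonpos.2 (mul_nonneg hr (sub_nonneg.2 hs.2)))
      _ = ν.real (Ioc x y) := by simp
  have hI_ge : exp (-(r * (y - x))) * ν.real (Ioc x y) ≤ I := by
    calc exp (-(r * (y - x))) * ν.real (Ioc x y)
        = ∫ _ in Ioc x y, exp (-(r * (y - x))) ∂ν := by simp [mul_comm]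
      _ ≤ I := setIntegral_mono_on (integrableOn_const (measure_ne_top _ _)) hint
            measurableSet_Ioc fun s hs => exp_le_exp.2 (by nlinarith [hs.1])
  have hexp : 1 - exp (-(r * (y - x))) ≤ r * (y - x) := by
    linarith [add_one_le_exp (-(r * (y - x)))]
  rw [expSurvivalConv_eq_add hr hxy, hcdf, abs_le]
  constructor <;> nlinarith [measureReal_nonneg (μ := ν) (s := Ioc x y)]

lemma hasDerivWithinAt_cdf_sub_expSurvivalConv [IsProbabilityMeasure ν] (hr : 0 ≤ r) (x : ℝ) :
    HasDerivWithinAt (fun a => cdf ν a - expSurvivalConv ν r a) (r * expSurvivalConv ν r x)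
      (Ici x) x := by
  set Φ := fun a => cdf ν a - expSurvivalConv ν r a
  set g := fun y => (1 - exp (-(r * (y - x)))) * expSurvivalConv ν r x
  have hg : HasDerivAt g (r * expSurvivalConv ν r x) x := by
    simpa [g] using ((((hasDerivAt_id x).sub_const x).const_mul r).neg.exp.const_sub 1).mul_const
      (expSurvivalConv ν r x)
  have hremainder : HasDerivWithinAt (fun y => Φ y - Φ x - g y) 0 (Ici x) x := by
    rw [hasDerivWithinAt_iff_isLittleO, isLittleO_iff]
    intro c hc
    have hcdf : Tendsto (fun y => r * (cdf ν y - cdf ν x)) (𝓝[Ici x] x) (𝓝 0) := by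
      simpa using ((cdf ν).right_continuous x).sub_const (cdf ν x) |>.const_mul r
    filter_upwards [self_mem_nhdsWithin, hcdf.eventually (ge_mem_nhds hc)]
      with y (hxy : x ≤ y) hsmall
    have hbound := abs_cdf_sub_expSurvivalConv_increment_le (ν := ν) hr hxy
    simp only [Φ, g, sub_self, mul_zero, neg_zero, exp_zero, zero_mul, sub_zero, smul_zero,
      norm_eq_abs, abs_of_nonneg (sub_nonneg.2 hxy)]
    nlinarith
  rw [← add_zero (r * expSurvivalConv ν r x)]
  exact ((hg.hasDerivWithinAt.const_add (Φ x)).add hremainder).congr (fun y _ => by simp)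
    (by simp)

end ExpSurvivalConv

lemma hasDerivWithinAt_integral_Iic {E : Type*} [NormedAddCommGroup E] [NormedSpace ℝ E]
    [CompleteSpace E] {f : ℝ → E} {x a : ℝ} (hxa : x < a) (hf : IntegrableOn f (Iic a))
    (hcont : ContinuousOn f (Ici x)) :
    HasDerivWithinAt (fun b => ∫ t in Iic b, f t) (f x) (Ici x) x := by
  have hmeas : StronglyMeasurableAtFilter f (𝓝[Ioi x] x) :=
    ⟨Ici x, mem_of_superset self_mem_nhdsWithin Ioi_subset_Ici_self,
      hcont.aestronglyMeasurable measurableSet_Ici⟩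
  have hftc := (intervalIntegral.integral_hasDerivWithinAt_right (s := Ici x) (t := Ioi x)
    IntervalIntegrable.refl hmeas
    ((hcont.continuousWithinAt self_mem_Ici).mono Ioi_subset_Ici_self)).const_add
      (∫ t in Iic x, f t)
  refine hftc.congr_of_eventuallyEq ?_ (by simp)
  filter_upwards [nhdsWithin_le_nhds (Iio_mem_nhds hxa)] with b (hb : b < a)
  rw [← intervalIntegral.integral_Iic_sub_Iic (hf.mono_set (Iic_subset_Iic.2 hxa.le))
    (hf.mono_set (Iic_subset_Iic.2 hb.le)), add_sub_cancel]

lemma ProbabilityTheory.iIndepFun.indepFun_sum_castSucc_last {Ω β : Type*} [MeasurableSpace Ω]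
    [MeasurableSpace β] [AddCommMonoid β] [MeasurableAdd₂ β] {P : Measure Ω} {n : ℕ}
    {B : Fin (n + 1) → Ω → β} (hB : iIndepFun B P) (hmB : ∀ l, Measurable (B l)) :
    IndepFun (fun ω => ∑ l : Fin n, B l.castSucc ω) (B (Fin.last n)) P := by
  have := hB.indepFun_finsetSum_of_notMem hmB
    (s := Finset.univ.map Fin.castSuccEmb) (i := Fin.last n) (by simp [Fin.castSucc_ne_last])
  rw [Finset.sum_map] at this
  convert this using 1
  ext ω
  simp [Finset.sum_apply]

section Layer

variable {Ω : Type*} [MeasurableSpace Ω] {P : Measure Ω} {S L : Ω → ℝ}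

lemma measureReal_le_lt_add_eq_expSurvivalConv [IsFiniteMeasure P] (hmS : Measurable S)
    (hmL : Measurable L) (hSL : IndepFun S L P) {r : ℝ} (hr : 0 < r)
    (hLexp : P.map L = expMeasure r) (a : ℝ) :
    P.real {ω | S ω ≤ a ∧ a < S ω + L ω} = expSurvivalConv (P.map S) r a := by
  have := isProbabilityMeasure_expMeasure hr
  set T : Set (ℝ × ℝ) := {p | p.1 ≤ a ∧ a < p.1 + p.2}
  have hT : MeasurableSet T := (measurableSet_le measurable_fst measurable_const).inter
      (measurableSet_lt measurable_const (measurable_fst.add measurable_snd))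
  have hjoint : P.map (fun ω => (S ω, L ω)) = (P.map S).prod (expMeasure r) := by
    rw [← hLexp]
    exact (indepFun_iff_map_prod_eq_prod_map_map hmS.aemeasurable hmL.aemeasurable).1 hSL
  have hsection : ∀ s, expMeasure r (Prod.mk s ⁻¹' T)
      = (Iic a).indicator (fun s => ENNReal.ofReal (exp (-(r * (a - s))))) s := by
    intro s
    by_cases hs : s ≤ a
    · have : Prod.mk s ⁻¹' T = Ioi (a - s) := by ext t; simp [T, hs, sub_lt_iff_lt_add']
      rw [this, expMeasure_Ioi hr (sub_nonneg.2 hs), indicator_of_mem (mem_Iic.2 hs)]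
    · have : Prod.mk s ⁻¹' T = ∅ := by ext t; simp [T, hs]
      rw [this, measure_empty, indicator_of_notMem (by simpa using hs)]
  rw [expSurvivalConv, integral_eq_lintegral_of_nonneg_ae (.of_forall fun _ => (exp_pos _).le)
      (by fun_prop), measureReal_def]
  change (P ((fun ω => (S ω, L ω)) ⁻¹' T)).toReal = _
  rw [← Measure.map_apply (hmS.prodMk hmL) hT, hjoint, Measure.prod_apply hT,
    lintegral_congr hsection, lintegral_indicator measurableSet_Iic]

lemma measureReal_add_le_eq_sub [IsFiniteMeasure P] (hL : ∀ᵐ ω ∂P, 0 ≤ L ω)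
    (hmS : Measurable S) (hmL : Measurable L) (a : ℝ) :
    P.real {ω | S ω + L ω ≤ a}
      = P.real {ω | S ω ≤ a} - P.real {ω | S ω ≤ a ∧ a < S ω + L ω} := by
  have hsum : MeasurableSet {ω | S ω + L ω ≤ a} :=
    measurableSet_le (hmS.add hmL) measurable_const
  have hinter :
      ({ω | S ω ≤ a} ∩ {ω | S ω + L ω ≤ a} : Set Ω) =ᵐ[P] {ω | S ω + L ω ≤ a} := by
    filter_upwards [hL] with ω hω
    change (S ω ≤ a ∧ S ω + L ω ≤ a) = (S ω + L ω ≤ a)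
    exact propext ⟨And.right, fun h => ⟨by linarith, h⟩⟩
  have hsdiff : ({ω | S ω ≤ a} \ {ω | S ω + L ω ≤ a} : Set Ω)
      = {ω | S ω ≤ a ∧ a < S ω + L ω} := by
    ext ω
    simp
  rw [← measureReal_inter_add_sdiff (s := {ω | S ω ≤ a}) hsum, measureReal_congr hinter,
    hsdiff]
  ring

theorem measureReal_le_lt_add_eq_inv_mul_density [IsProbabilityMeasure P] (hmS : Measurable S)
    (hmL : Measurable L) (hSL : IndepFun S L P) {r : ℝ} (hr : 0 < r)
    (hLexp : P.map L = expMeasure r) {f : ℝ → ℝ}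
    (hf_cdf : ∀ a, P.real {ω | S ω + L ω ≤ a} = ∫ t in Iic a, f t) {x : ℝ}
    (hf_cont : ContinuousOn f (Ici x)) :
    P.real {ω | S ω ≤ x ∧ x < S ω + L ω} = (1 / r) * f x := by
  have : IsProbabilityMeasure (P.map S) := Measure.isProbabilityMeasure_map hmS.aemeasurable
  have hL_nonneg : ∀ᵐ ω ∂P, 0 ≤ L ω := by
    refine ae_of_ae_map hmL.aemeasurable ?_
    filter_upwards [hLexp ▸ ae_pos_expMeasure hr] with t ht using ht.le
  have hF : ∀ a,
      P.real {ω | S ω + L ω ≤ a} = cdf (P.map S) a - expSurvivalConv (P.map S) r a := by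
    intro a
    rw [measureReal_add_le_eq_sub hL_nonneg hmS hmL, cdf_eq_real,
      map_measureReal_apply hmS measurableSet_Iic,
      measureReal_le_lt_add_eq_expSurvivalConv hmS hmL hSL hr hLexp]
    rfl
  -- `f` is integrable on `(-∞, a]` as soon as `∫_{(-∞, a]} f = P(S + L ≤ a)` is nonzero.
  obtain ⟨a, hxa, hFa⟩ : ∃ a, x < a ∧ P.real {ω | S ω + L ω ≤ a} ≠ 0 := by
    have : IsProbabilityMeasure (P.map (S + L)) :=
      Measure.isProbabilityMeasure_map (hmS.add hmL).aemeasurable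
    obtain ⟨a, hxa, ha⟩ := ((eventually_gt_atTop x).and ((tendsto_cdf_atTop
      (μ := P.map (S + L))).eventually (eventually_ne_nhds one_ne_zero))).exists
    rw [cdf_eq_real, map_measureReal_apply (hmS.add hmL) measurableSet_Iic] at ha
    exact ⟨a, hxa, ha⟩
  have hderiv_f := hasDerivWithinAt_integral_Iic hxa
    (Integrable.of_integral_ne_zero (hf_cdf a ▸ hFa)) hf_cont
  simp only [← hf_cdf, hF] at hderiv_f
  have hfx : f x = r * expSurvivalConv (P.map S) r x :=
    (uniqueDiffOn_Ici x x self_mem_Ici).eq_deriv _ hderiv_f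
      (hasDerivWithinAt_cdf_sub_expSurvivalConv hr.le x)
  rw [measureReal_le_lt_add_eq_expSurvivalConv hmS hmL hSL hr hLexp, hfx, one_div,
    inv_mul_cancel_left₀ hr.ne']

end Layer

/-- For independent exponentials `B 0, ..., B i` (i.e. `i+1` of them, so at least
one) with positive rates, partial sums `B_1^j` (`B_1^0 := 0`), and `f` the (continuous) density
of the full sum `B_1^{i+1}`, for all `x ≥ 0`:
`P{B_1^i ≤ x < B_1^{i+1}} = (1/μ_last) f x`. -/
theorem hypoexp_layer_prob_eq_density
    {Ω : Type*} [MeasurableSpace Ω] (P : Measure Ω) [IsProbabilityMeasure P]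
    (i : ℕ) (μ : Fin (i + 1) → ℝ) (hμ : ∀ l, 0 < μ l)
    (B : Fin (i + 1) → Ω → ℝ) (hmB : ∀ l, Measurable (B l))
    (hindep : iIndepFun B P)
    (hdist : ∀ l, Measure.map (B l) P = expMeasure (μ l))
    (f : ℝ → ℝ)
    (hf_cont : ContinuousOn f (Set.Ici 0))
    (hf_cdf : ∀ a : ℝ,
      (P {ω | (∑ l : Fin (i + 1), B l ω) ≤ a}).toReal = ∫ t in Set.Iic a, f t)
    (x : ℝ) (hx : 0 ≤ x) :
    (P {ω | (∑ l : Fin i, B l.castSucc ω) ≤ x ∧ x < ∑ l : Fin (i + 1), B l ω}).toReal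
      = (1 / μ (Fin.last i)) * f x := by
  have hsum (ω : Ω) :
      ∑ l : Fin (i + 1), B l ω = ∑ l : Fin i, B l.castSucc ω + B (Fin.last i) ω :=
    Fin.sum_univ_castSucc _
  simp only [hsum, ← measureReal_def] at hf_cdf ⊢
  exact measureReal_le_lt_add_eq_inv_mul_density (Finset.measurable_sum _ fun l _ => hmB _)
    (hmB _) (hindep.indepFun_sum_castSucc_last hmB) (hμ _) (hdist _) hf_cdf
    (hf_cont.mono (Ici_subset_Ici.2 hx))
end

section
/- Let λ, ν, μ_1,...,μ_I > 0 with λ Σ 1/μ_i > 1. The system of equations λ − μ_1 z_1/‖z‖_1 − ν z_1 = 0 and μ_{i-1} z_{i-1}/‖z‖_1 − μ_i z_i/‖z‖_1 − ν z_i = 0 for i = 2,...,I has a unique solution z* ∈ (0,∞)^I, given by z_1* = λ‖z*‖_1/(μ_1 + ν‖z*‖_1), z_i* = μ_{i-1} z_{i-1}*/(μ_i + ν‖z*‖_1), where ‖z*‖_1 is the unique positive root of f(x)=1 with f as in the invariant-point equation. -/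
open Set

/-- `f` from the invariant-point equation, with `Fin (n+1)`-indexed rates:
`f x = λ ∑_{i} (∏_{j<i} μ j) / (∏_{j≤i} (μ j + ν x))`. -/
noncomputable def invariantF (n : ℕ) (lam ν : ℝ) (μ : Fin (n + 1) → ℝ) (x : ℝ) : ℝ :=
  lam * ∑ i : Fin (n + 1),
    (∏ j ∈ Finset.univ.filter (· < i), μ j) /
      ∏ j ∈ Finset.univ.filter (· ≤ i), (μ j + ν * x)

/-- The invariant fluid-model equations `λ − μ_1 z_1/‖z‖ − ν z_1 = 0`,
`μ_{i-1} z_{i-1}/‖z‖ − μ_i z_i/‖z‖ − ν z_i = 0` for `i ≥ 2` (here `0`-based). -/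
def InvariantEqns (n : ℕ) (lam ν : ℝ) (μ : Fin (n + 1) → ℝ) (z : Fin (n + 1) → ℝ) : Prop :=
  lam - μ 0 * z 0 / (∑ j, z j) - ν * z 0 = 0 ∧
  ∀ i : Fin (n + 1), i ≠ 0 →
    μ (i - 1) * z (i - 1) / (∑ j, z j) - μ i * z i / (∑ j, z j) - ν * z i = 0

/-! Dividing the equations by `s = ‖z‖₁`, a positive solution is determined by `s` through the
recursion `z₀ = λ s / (μ₀ + ν s)`, `zᵢ = μᵢ₋₁ zᵢ₋₁ / (μᵢ + ν s)`, whose solution is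
`zᵢ = λ s ∏_{j<i} μⱼ / ∏_{j≤i} (μⱼ + ν s)`. These coordinates sum to `s f(s)`, so they have norm `s`
exactly when `f(s) = 1`. Finally `f` is continuous and strictly decreasing on `[0, ∞)`, with
`f(0) = λ ∑ 1/μᵢ > 1` and `f(s) ≤ λ I / (ν s)`, so `f = 1` has exactly one positive root. -/

open Finset

theorem Finset.prod_filter_le_eq_mul_prod_filter_lt {ι M : Type*} [PartialOrder ι] [Fintype ι]
    [DecidableEq ι] [DecidableLE ι] [DecidableLT ι] [CommMonoid M] (g : ι → M) (i : ι) :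
    ∏ j ∈ Finset.univ.filter (· ≤ i), g j = g i * ∏ j ∈ Finset.univ.filter (· < i), g j := by
  have : Finset.univ.filter (· ≤ i) = insert i (Finset.univ.filter (· < i)) := by
    ext j; simp [le_iff_lt_or_eq, or_comm]
  rw [this, prod_insert (by simp)]

theorem Fin.filter_lt_eq_filter_le_sub_one {n : ℕ} {i : Fin (n + 1)} (hi : i ≠ 0) :
    Finset.univ.filter (· < i) = Finset.univ.filter (· ≤ i - 1) := by
  have := Fin.val_ne_zero_iff.mpr hi
  ext j
  simp only [mem_filter, Finset.mem_univ, true_and, Fin.lt_def, Fin.le_def, Fin.coe_sub_one,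
    if_neg hi]
  omega

theorem sub_div_sub_mul_eq_zero_iff {K : Type*} [Field K] {p b c s z : K} (hs : s ≠ 0)
    (hd : b + c * s ≠ 0) : p - b * z / s - c * z = 0 ↔ z = p * s / (b + c * s) := by
  rw [eq_div_iff hd]
  field_simp
  constructor <;> intro h <;> linear_combination -h

section InvariantPoint

variable {n : ℕ} {lam ν : ℝ} {μ : Fin (n + 1) → ℝ}

noncomputable def invariantPoint (n : ℕ) (lam ν : ℝ) (μ : Fin (n + 1) → ℝ) (x : ℝ)
    (i : Fin (n + 1)) : ℝ :=
  lam * x * (∏ j ∈ Finset.univ.filter (· < i), μ j) /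
    ∏ j ∈ Finset.univ.filter (· ≤ i), (μ j + ν * x)

theorem sum_invariantPoint (x : ℝ) :
    ∑ i, invariantPoint n lam ν μ x i = x * invariantF n lam ν μ x := by
  simp only [invariantPoint, invariantF, mul_sum]
  exact sum_congr rfl fun i _ => by ring

theorem invariantPoint_zero (x : ℝ) :
    invariantPoint n lam ν μ x 0 = lam * x / (μ 0 + ν * x) := by
  rw [invariantPoint, prod_filter_le_eq_mul_prod_filter_lt]
  simp

theorem invariantPoint_of_ne_zero (x : ℝ) {i : Fin (n + 1)} (hi : i ≠ 0) :
    invariantPoint n lam ν μ x i =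
      μ (i - 1) * invariantPoint n lam ν μ x (i - 1) / (μ i + ν * x) := by
  rw [invariantPoint, invariantPoint, prod_filter_le_eq_mul_prod_filter_lt _ i,
    Fin.filter_lt_eq_filter_le_sub_one hi, prod_filter_le_eq_mul_prod_filter_lt μ (i - 1),
    ← div_div]
  ring

theorem invariantPoint_pos (hlam : 0 < lam) (hν : 0 ≤ ν) (hμ : ∀ i, 0 < μ i) {x : ℝ}
    (hx : 0 < x) (i : Fin (n + 1)) : 0 < invariantPoint n lam ν μ x i :=
  div_pos (mul_pos (by positivity) (prod_pos fun j _ => hμ j))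
    (prod_pos fun j _ => by have := hμ j; positivity)

theorem eq_invariantPoint_of_recursion {z : Fin (n + 1) → ℝ} {s : ℝ}
    (h₀ : z 0 = lam * s / (μ 0 + ν * s))
    (hsucc : ∀ i, i ≠ 0 → z i = μ (i - 1) * z (i - 1) / (μ i + ν * s)) :
    z = invariantPoint n lam ν μ s := by
  funext i
  induction i using Fin.induction with
  | zero => rw [h₀, invariantPoint_zero]
  | succ k ih =>
    have hk : (k.succ : Fin (n + 1)) - 1 = k.castSucc := by simp [Fin.ext_iff, Fin.coe_sub_one]
    rw [hsucc _ k.succ_ne_zero, invariantPoint_of_ne_zero _ k.succ_ne_zero, hk, ih]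

theorem invariantEqns_iff (hν : 0 ≤ ν) (hμ : ∀ i, 0 < μ i) {z : Fin (n + 1) → ℝ}
    (hs : 0 < ∑ j, z j) :
    InvariantEqns n lam ν μ z ↔
      z 0 = lam * (∑ j, z j) / (μ 0 + ν * ∑ j, z j) ∧
      ∀ i, i ≠ 0 → z i = μ (i - 1) * z (i - 1) / (μ i + ν * ∑ j, z j) := by
  have hd : ∀ i, μ i + ν * ∑ j, z j ≠ 0 := fun i => by have := hμ i; positivity
  refine and_congr (sub_div_sub_mul_eq_zero_iff hs.ne' (hd 0)) (forall₂_congr fun i _ => ?_)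
  rw [sub_div_sub_mul_eq_zero_iff hs.ne' (hd i), div_mul_cancel₀ _ hs.ne']

theorem invariantEqns_invariantPoint (hν : 0 ≤ ν) (hμ : ∀ i, 0 < μ i) {x : ℝ} (hx : 0 < x)
    (hfx : invariantF n lam ν μ x = 1) : InvariantEqns n lam ν μ (invariantPoint n lam ν μ x) := by
  have hsum : ∑ j, invariantPoint n lam ν μ x j = x := by rw [sum_invariantPoint, hfx, mul_one]
  rw [invariantEqns_iff hν hμ (hsum.symm ▸ hx), hsum]
  exact ⟨invariantPoint_zero x, fun i hi => invariantPoint_of_ne_zero x hi⟩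

theorem eq_invariantPoint_of_invariantEqns (hν : 0 ≤ ν) (hμ : ∀ i, 0 < μ i)
    {z : Fin (n + 1) → ℝ} (hz : ∀ i, 0 < z i) (h : InvariantEqns n lam ν μ z) :
    z = invariantPoint n lam ν μ (∑ j, z j) := by
  obtain ⟨h₀, hsucc⟩ := (invariantEqns_iff hν hμ (sum_pos (fun i _ => hz i) univ_nonempty)).1 h
  exact eq_invariantPoint_of_recursion h₀ hsucc

theorem invariantF_sum_eq_one_of_invariantEqns (hν : 0 ≤ ν) (hμ : ∀ i, 0 < μ i)
    {z : Fin (n + 1) → ℝ} (hz : ∀ i, 0 < z i) (h : InvariantEqns n lam ν μ z) :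
    invariantF n lam ν μ (∑ j, z j) = 1 := by
  have hs : 0 < ∑ j, z j := sum_pos (fun i _ => hz i) univ_nonempty
  have hsum : ∑ j, z j = (∑ j, z j) * invariantF n lam ν μ (∑ j, z j) := by
    conv_lhs => rw [eq_invariantPoint_of_invariantEqns hν hμ hz h]
    exact sum_invariantPoint _
  exact (mul_eq_left₀ hs.ne').1 hsum.symm

end InvariantPoint

section InvariantF

variable {n : ℕ} {lam ν : ℝ} {μ : Fin (n + 1) → ℝ}

theorem invariantF_zero (hμ : ∀ i, 0 < μ i) : invariantF n lam ν μ 0 = lam * ∑ i, 1 / μ i := by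
  simp only [invariantF, mul_zero, add_zero, prod_filter_le_eq_mul_prod_filter_lt μ]
  refine congrArg _ (sum_congr rfl fun i _ => ?_)
  rw [div_mul_cancel_right₀ (prod_pos fun j _ => hμ j).ne', one_div]

theorem strictAntiOn_invariantF (hlam : 0 < lam) (hν : 0 < ν) (hμ : ∀ i, 0 < μ i) :
    StrictAntiOn (invariantF n lam ν μ) (Ici 0) := by
  intro a (ha : 0 ≤ a) b _ hab
  refine mul_lt_mul_of_pos_left (sum_lt_sum_of_nonempty univ_nonempty fun i _ => ?_) hlam
  refine div_lt_div_of_pos_left (prod_pos fun j _ => hμ j) ?_ ?_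
  · exact prod_pos fun j _ => by have := hμ j; positivity
  · refine prod_lt_prod_of_nonempty (fun j _ => ?_) (fun j _ => ?_) ⟨i, by simp⟩
    · have := hμ j; positivity
    · gcongr

theorem continuousOn_invariantF (hν : 0 ≤ ν) (hμ : ∀ i, 0 < μ i) :
    ContinuousOn (invariantF n lam ν μ) (Ici 0) := by
  refine continuousOn_const.mul (continuousOn_finsetSum _ fun i _ => ?_)
  refine continuousOn_const.div (by fun_prop) fun x (hx : 0 ≤ x) => ?_
  exact (prod_pos fun j _ => by have := hμ j; positivity).ne'

theorem invariantF_le (hlam : 0 ≤ lam) (hν : 0 < ν) (hμ : ∀ i, 0 < μ i) {x : ℝ} (hx : 0 < x) :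
    invariantF n lam ν μ x ≤ lam * (n + 1) / (ν * x) := by
  have hterm : ∀ i, (∏ j ∈ Finset.univ.filter (· < i), μ j) /
      ∏ j ∈ Finset.univ.filter (· ≤ i), (μ j + ν * x) ≤ 1 / (ν * x) := by
    intro i
    have hratio : (∏ j ∈ Finset.univ.filter (· < i), μ j) /
        ∏ j ∈ Finset.univ.filter (· < i), (μ j + ν * x) ≤ 1 :=
      div_le_one_of_le₀ (prod_le_prod (fun j _ => (hμ j).le) fun j _ => by
          have := mul_pos hν hx; linarith)
        (prod_nonneg fun j _ => by have := hμ j; positivity)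
    rw [prod_filter_le_eq_mul_prod_filter_lt, mul_comm, ← div_div]
    calc _ ≤ 1 / (μ i + ν * x) := by gcongr; have := hμ i; positivity
      _ ≤ 1 / (ν * x) := by have := hμ i; gcongr; linarith
  calc invariantF n lam ν μ x ≤ lam * ∑ _i : Fin (n + 1), 1 / (ν * x) :=
        mul_le_mul_of_nonneg_left (sum_le_sum fun i _ => hterm i) hlam
    _ = lam * (n + 1) / (ν * x) := by
        rw [sum_const, card_univ, Fintype.card_fin, nsmul_eq_mul]; push_cast; ring

theorem existsUnique_pos_invariantF_eq_one (hlam : 0 < lam) (hν : 0 < ν) (hμ : ∀ i, 0 < μ i)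
    (hover : 1 < lam * ∑ i, 1 / μ i) : ∃! x, 0 < x ∧ invariantF n lam ν μ x = 1 := by
  set X := lam * (n + 1) / ν
  have hX : 0 < X := by positivity
  have hfX : invariantF n lam ν μ X ≤ 1 :=
    (invariantF_le hlam.le hν hμ hX).trans_eq (by simp only [X]; field_simp)
  obtain ⟨x, hx, hfx⟩ := intermediate_value_Ioc' hX.le
    ((continuousOn_invariantF hν.le hμ).mono Icc_subset_Ici_self)
    ⟨hfX, (invariantF_zero hμ).symm ▸ hover⟩
  exact ⟨x, ⟨hx.1, hfx⟩, fun y hy => (strictAntiOn_invariantF hlam hν hμ).injOn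
    (le_of_lt hy.1) (le_of_lt hx.1) (hy.2.trans hfx.symm)⟩

end InvariantF

/-- under the overload assumption the invariant equations have a unique
solution in `(0,∞)^I`; any such solution is given by the stated recursion and its norm is
the unique positive root of `f(x) = 1`. -/
theorem invariant_point_exists_unique (n : ℕ) (lam ν : ℝ) (hlam : 0 < lam) (hν : 0 < ν)
    (μ : Fin (n + 1) → ℝ) (hμ : ∀ i, 0 < μ i)
    (hover : 1 < lam * ∑ i, 1 / μ i) :
    (∃! z : Fin (n + 1) → ℝ, (∀ i, 0 < z i) ∧ InvariantEqns n lam ν μ z) ∧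
    (∀ z : Fin (n + 1) → ℝ, (∀ i, 0 < z i) → InvariantEqns n lam ν μ z →
      z 0 = lam * (∑ j, z j) / (μ 0 + ν * ∑ j, z j) ∧
      (∀ i, i ≠ 0 → z i = μ (i - 1) * z (i - 1) / (μ i + ν * ∑ j, z j)) ∧
      invariantF n lam ν μ (∑ j, z j) = 1) ∧
    (∃! x : ℝ, 0 < x ∧ invariantF n lam ν μ x = 1) := by
  obtain ⟨x, ⟨hx, hfx⟩, hx_unique⟩ := existsUnique_pos_invariantF_eq_one hlam hν hμ hover
  have hsum_pos : ∀ z : Fin (n + 1) → ℝ, (∀ i, 0 < z i) → 0 < ∑ j, z j :=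
    fun z hz => sum_pos (fun i _ => hz i) univ_nonempty
  refine ⟨⟨invariantPoint n lam ν μ x,
      ⟨invariantPoint_pos hlam hν.le hμ hx, invariantEqns_invariantPoint hν.le hμ hx hfx⟩,
      fun z ⟨hz, h⟩ => ?_⟩, fun z hz h => ?_, ⟨x, ⟨hx, hfx⟩, hx_unique⟩⟩
  · have hnorm : ∑ j, z j = x :=
      hx_unique _ ⟨hsum_pos z hz, invariantF_sum_eq_one_of_invariantEqns hν.le hμ hz h⟩
    rw [eq_invariantPoint_of_invariantEqns hν.le hμ hz h, hnorm]
  · obtain ⟨h₀, hsucc⟩ := (invariantEqns_iff hν.le hμ (hsum_pos z hz)).1 h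
    exact ⟨h₀, hsucc, invariantF_sum_eq_one_of_invariantEqns hν.le hμ hz h⟩
end

section
/- For λ, μ > 0 and I ∈ ℕ with I ≥ 1 and λI/μ > 1, the equation (λ/μ) Σ_{i=1}^I u^i = 1 has a unique solution u = u(I) in (0,1), and u(I) → μ/(λ+μ) as I → ∞. -/
open Set Filter Topology

private lemma geom_key (x : ℝ) (I : ℕ) :
    (1 - x) * ∑ i ∈ Finset.Icc 1 I, x ^ i = x - x ^ (I + 1) := by
  induction I with
  | zero => simp
  | succ n ih =>
      rw [Finset.sum_Icc_succ_top (by omega : 1 ≤ n + 1), mul_add, ih]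
      ring

private lemma sum_lt_sum_pow (I : ℕ) (hI : 1 ≤ I) {v w : ℝ} (hv : 0 ≤ v) (hvw : v < w) :
    ∑ i ∈ Finset.Icc 1 I, v ^ i < ∑ i ∈ Finset.Icc 1 I, w ^ i := by
  apply Finset.sum_lt_sum_of_nonempty
  · exact ⟨1, by simp [hI]⟩
  · intro i hi
    have hi1 : 1 ≤ i := (Finset.mem_Icc.mp hi).1
    exact pow_lt_pow_left₀ hvw hv (by omega)

/-- for `λ, μ > 0` and each `I ≥ 1` with `λI/μ > 1`, the equation
`(λ/μ) ∑_{i=1}^I u^i = 1` has a unique solution `u(I) ∈ (0,1)`, and `u(I) → μ/(λ+μ)`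
as `I → ∞`. -/
theorem root_unique_and_tendsto (lam mu : ℝ) (hlam : 0 < lam) (hmu : 0 < mu)
    (u : ℕ → ℝ)
    (hu : ∀ I : ℕ, 1 ≤ I → 1 < lam * I / mu →
      u I ∈ Set.Ioo (0 : ℝ) 1 ∧ (lam / mu) * ∑ i ∈ Finset.Icc 1 I, u I ^ i = 1) :
    (∀ I : ℕ, 1 ≤ I → 1 < lam * I / mu →
      ∃! v : ℝ, v ∈ Set.Ioo (0 : ℝ) 1 ∧ (lam / mu) * ∑ i ∈ Finset.Icc 1 I, v ^ i = 1) ∧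
    Tendsto u atTop (nhds (mu / (lam + mu))) := by
  have hratio_pos : (0 : ℝ) < lam / mu := div_pos hlam hmu
  constructor
  · intro I hI hr
    obtain ⟨hmem, heq⟩ := hu I hI hr
    refine ⟨u I, ⟨hmem, heq⟩, ?_⟩
    rintro v ⟨hvmem, hveq⟩
    have hS : ∑ i ∈ Finset.Icc 1 I, v ^ i = ∑ i ∈ Finset.Icc 1 I, u I ^ i :=
      mul_left_cancel₀ (ne_of_gt hratio_pos) (hveq.trans heq.symm)
    by_contra hne
    rcases lt_or_gt_of_ne hne with h | h
    · exact absurd hS (ne_of_lt (sum_lt_sum_pow I hI hvmem.1.le h))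
    · exact absurd hS.symm (ne_of_lt (sum_lt_sum_pow I hI hmem.1.le h))
  · -- convergence
    obtain ⟨N, hN⟩ := exists_nat_gt (mu / lam)
    set N0 := max N 1 with hN0def
    have hcond : ∀ I, N0 ≤ I → 1 ≤ I ∧ 1 < lam * I / mu := by
      intro I hIN
      have h1 : 1 ≤ I := le_trans (le_max_right N 1) hIN
      refine ⟨h1, ?_⟩
      have hNI : (N : ℝ) ≤ I := by exact_mod_cast le_trans (le_max_left N 1) hIN
      have hmuI : mu / lam < I := lt_of_lt_of_le hN hNI
      rw [lt_div_iff₀ hmu]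
      have := (div_lt_iff₀ hlam).mp hmuI
      nlinarith
    obtain ⟨hcmem, hceq⟩ := hu N0 (hcond N0 le_rfl).1 (hcond N0 le_rfl).2
    set c := u N0 with hcdef
    -- eventual bounds
    have hbounds : ∀ I, N0 ≤ I →
        mu / (lam + mu) ≤ u I ∧
        u I ≤ mu / (lam + mu) + lam / (lam + mu) * c ^ (I + 1) := by
      intro I hIN
      obtain ⟨hmem, heq⟩ := hu I (hcond I hIN).1 (hcond I hIN).2
      have hS : lam * ∑ i ∈ Finset.Icc 1 I, u I ^ i = mu := by
        field_simp at heq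
        linarith
      have hg := geom_key (u I) I
      have hkey : (lam + mu) * u I = mu + lam * u I ^ (I + 1) := by
        linear_combination (1 - u I) * hS - lam * hg
      have hlmpos : (0 : ℝ) < lam + mu := by linarith
      have hlow : mu / (lam + mu) ≤ u I := by
        rw [div_le_iff₀ hlmpos]
        nlinarith [pow_pos hmem.1 (I + 1)]
      refine ⟨hlow, ?_⟩
      -- first show u I ≤ c
      have hub : u I ≤ c := by
        by_contra hcon
        push_neg at hcon
        have h1 : ∑ i ∈ Finset.Icc 1 I, c ^ i < ∑ i ∈ Finset.Icc 1 I, u I ^ i :=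
          sum_lt_sum_pow I (hcond I hIN).1 hcmem.1.le hcon
        have h2 : ∑ i ∈ Finset.Icc 1 N0, c ^ i ≤ ∑ i ∈ Finset.Icc 1 I, c ^ i :=
          Finset.sum_le_sum_of_subset_of_nonneg (Finset.Icc_subset_Icc_right hIN)
            (fun i _ _ => pow_nonneg hcmem.1.le i)
        have h3 : ∑ i ∈ Finset.Icc 1 N0, c ^ i = ∑ i ∈ Finset.Icc 1 I, u I ^ i :=
          mul_left_cancel₀ (ne_of_gt hratio_pos) (hceq.trans heq.symm)
        linarith
      have hpow : u I ^ (I + 1) ≤ c ^ (I + 1) := pow_le_pow_left₀ hmem.1.le hub (I + 1)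
      rw [show mu / (lam + mu) + lam / (lam + mu) * c ^ (I + 1)
            = (mu + lam * c ^ (I + 1)) / (lam + mu) by ring, le_div_iff₀ hlmpos]
      nlinarith
    have hc1 : c < 1 := hcmem.2
    have hc0 : 0 ≤ c := hcmem.1.le
    have hupper : Tendsto (fun I : ℕ => mu / (lam + mu) + lam / (lam + mu) * c ^ (I + 1))
        atTop (nhds (mu / (lam + mu))) := by
      have h1 : Tendsto (fun I : ℕ => c ^ (I + 1)) atTop (nhds 0) :=
        (tendsto_pow_atTop_nhds_zero_of_lt_one hc0 hc1).comp (tendsto_add_atTop_nat 1)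
      have h2 := h1.const_mul (lam / (lam + mu))
      simpa using tendsto_const_nhds.add h2
    refine tendsto_of_tendsto_of_tendsto_of_le_of_le' tendsto_const_nhds hupper ?_ ?_
    · exact (eventually_ge_atTop N0).mono fun I hI => (hbounds I hI).1
    · exact (eventually_ge_atTop N0).mono fun I hI => (hbounds I hI).2
end

section
/- If u(I) ∈ (0,1) solves (λ/μ) Σ_{i=1}^I u^i = 1 and P_I := Σ_{i=1}^{I-1} (1/i) u(I)^i (1 − u(I)) + (1/I) u(I)^I, then P_I → −(λ/(λ+μ)) ln(λ/(λ+μ)) as I → ∞. -/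
/-!
With `a = λ/μ`, multiplying `a ∑_{i=1}^I u^i = 1` by `1 - u` gives `u (1 + a) = 1 + a u^(I+1)`,
and `I u^I ≤ ∑_{i=1}^I u^i = 1/a`; hence `u(I) → 1/(1+a) = μ/(λ+μ)`.
For `v ∈ [0,1)`, `P_I(v) = (1-v) ∑_{0<i<I} v^i/i + v^I/I` differs from `-(1-v) log(1-v)` by at most
`2 v^I`, by the Taylor series of `log (1 - v)`. Since `u(I)` eventually stays below some `c < 1`,
`u(I)^I → 0`, and continuity of `x ↦ -x log x` gives the limit.
-/

open Set Filter Topology Real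

noncomputable def freelancerProb (v : ℝ) (I : ℕ) : ℝ :=
  (∑ i ∈ Finset.Icc 1 (I - 1), (1 / (i : ℝ)) * v ^ i * (1 - v)) + (1 / (I : ℝ)) * v ^ I

theorem sum_Icc_pow_mul_one_sub {R : Type*} [CommRing R] (x : R) (n : ℕ) :
    (∑ i ∈ Finset.Icc 1 n, x ^ i) * (1 - x) = x * (1 - x ^ n) := by
  induction n with
  | zero => simp
  | succ n ih =>
    rw [Finset.sum_Icc_succ_top (by omega), add_mul, ih]
    ring

theorem nat_mul_pow_le_sum_Icc_pow {R : Type*} [CommSemiring R] [PartialOrder R]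
    [IsOrderedRing R] {v : R} (hv0 : 0 ≤ v) (hv1 : v ≤ 1) (n : ℕ) :
    n * v ^ n ≤ ∑ i ∈ Finset.Icc 1 n, v ^ i := by
  simpa using Finset.card_nsmul_le_sum (Finset.Icc 1 n) (v ^ ·) (v ^ n)
    fun i hi ↦ pow_le_pow_of_le_one hv0 hv1 (Finset.mem_Icc.mp hi).2

theorem mem_Icc_of_mul_sum_Icc_pow_eq_one {a v : ℝ} {n : ℕ} (ha : 0 < a) (hv : v ∈ Icc 0 1)
    (hn : 0 < n) (h : a * ∑ i ∈ Finset.Icc 1 n, v ^ i = 1) :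
    v ∈ Icc (1 / (1 + a)) ((1 + 1 / n) / (1 + a)) := by
  have hvn : 0 ≤ v ^ n := pow_nonneg hv.1 n
  have hroot : v * (1 + a) = 1 + a * v * v ^ n := by
    linear_combination (1 - v) * h - a * sum_Icc_pow_mul_one_sub v n
  have hpow : n * (a * v ^ n) ≤ 1 := by
    rw [← h, mul_left_comm]
    exact mul_le_mul_of_nonneg_left (nat_mul_pow_le_sum_Icc_pow hv.1 hv.2 n) ha.le
  have hn' : (0 : ℝ) < n := by exact_mod_cast hn
  constructor
  · rw [div_le_iff₀ (by linarith)]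
    nlinarith [mul_nonneg (mul_nonneg ha.le hv.1) hvn]
  · rw [le_div_iff₀ (by linarith), hroot, add_le_add_iff_left, le_div_iff₀ hn']
    nlinarith [mul_le_mul_of_nonneg_left hv.2 (mul_nonneg ha.le hvn)]

theorem tendsto_of_mul_sum_Icc_pow_eq_one {a : ℝ} (ha : 0 < a) {v : ℕ → ℝ}
    (hv : ∀ᶠ n in atTop, v n ∈ Icc 0 1 ∧ a * ∑ i ∈ Finset.Icc 1 n, v n ^ i = 1) :
    Tendsto v atTop (𝓝 (1 / (1 + a))) := by
  have hbounds : ∀ᶠ n : ℕ in atTop, v n ∈ Icc (1 / (1 + a)) ((1 + 1 / n) / (1 + a)) := by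
    filter_upwards [hv, eventually_gt_atTop 0] with n ⟨hvn, hsum⟩ hn
    exact mem_Icc_of_mul_sum_Icc_pow_eq_one ha hvn hn hsum
  have hupper : Tendsto (fun n : ℕ ↦ (1 + 1 / (n : ℝ)) / (1 + a)) atTop (𝓝 (1 / (1 + a))) := by
    simpa using (tendsto_one_div_atTop_nhds_zero_nat.const_add 1).div_const (1 + a)
  exact tendsto_of_tendsto_of_tendsto_of_le_of_le' tendsto_const_nhds hupper
    (hbounds.mono fun _ h ↦ h.1) (hbounds.mono fun _ h ↦ h.2)

theorem abs_freelancerProb_sub_negMulLog_le {v : ℝ} (hv0 : 0 ≤ v) (hv1 : v < 1) {I : ℕ}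
    (hI : 1 ≤ I) : |freelancerProb v I - negMulLog (1 - v)| ≤ 2 * v ^ I := by
  obtain ⟨K, rfl⟩ := Nat.exists_eq_add_of_le' hI
  set S := ∑ i ∈ Finset.range K, v ^ (i + 1) / (i + 1)
  have hsum :
      ∑ i ∈ Finset.Icc 1 (K + 1 - 1), (1 / (i : ℝ)) * v ^ i * (1 - v) = (1 - v) * S := by
    rw [Nat.add_sub_cancel, Finset.mul_sum, ← Finset.Ico_add_one_right_eq_Icc,
      Finset.sum_Ico_eq_sum_range, Nat.add_sub_cancel]
    refine Finset.sum_congr rfl fun i _ ↦ ?_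
    push_cast
    ring
  have htaylor : |S + log (1 - v)| ≤ v ^ (K + 1) / (1 - v) := by
    have h := abs_log_sub_add_sum_range_le (by rwa [abs_of_nonneg hv0]) K
    rwa [abs_of_nonneg hv0] at h
  have hv : 0 < 1 - v := by linarith
  have hK : (1 : ℝ) ≤ (K + 1 : ℕ) := by exact_mod_cast hI
  calc |freelancerProb v (K + 1) - negMulLog (1 - v)|
      = |(1 - v) * (S + log (1 - v)) + v ^ (K + 1) / (K + 1 : ℕ)| := by
        rw [freelancerProb, negMulLog, hsum]; congr 1; ring
    _ ≤ (1 - v) * (v ^ (K + 1) / (1 - v)) + v ^ (K + 1) := by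
        refine (abs_add_le _ _).trans (add_le_add ?_ ?_)
        · rw [abs_mul, abs_of_pos hv]
          exact mul_le_mul_of_nonneg_left htaylor hv.le
        · rw [abs_of_nonneg (by positivity)]
          exact div_le_self (by positivity) hK
    _ = 2 * v ^ (K + 1) := by field_simp; ring

theorem tendsto_freelancerProb {v : ℕ → ℝ} {x : ℝ} (hv0 : ∀ᶠ I in atTop, 0 ≤ v I)
    (hvx : Tendsto v atTop (𝓝 x)) (hx : x < 1) :
    Tendsto (fun I ↦ freelancerProb (v I) I) atTop (𝓝 (negMulLog (1 - x))) := by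
  obtain ⟨c, hxc, hc1⟩ := exists_between hx
  have hvc : ∀ᶠ I in atTop, v I ∈ Icc 0 c := hv0.and (hvx.eventually_le_const hxc)
  have hpow : Tendsto (fun I ↦ v I ^ I) atTop (𝓝 0) := by
    obtain ⟨_, hc0⟩ := hvc.exists
    refine squeeze_zero' (hv0.mono fun I h ↦ pow_nonneg h I) ?_
      (tendsto_pow_atTop_nhds_zero_of_lt_one (hc0.1.trans hc0.2) hc1)
    filter_upwards [hvc] with I h using pow_le_pow_left₀ h.1 h.2 I
  have hmain : Tendsto (fun I ↦ negMulLog (1 - v I)) atTop (𝓝 (negMulLog (1 - x))) :=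
    (continuous_negMulLog.tendsto _).comp (tendsto_const_nhds.sub hvx)
  have herr : Tendsto (fun I ↦ freelancerProb (v I) I - negMulLog (1 - v I)) atTop (𝓝 0) := by
    refine squeeze_zero_norm' ?_ (by simpa using hpow.const_mul 2)
    filter_upwards [hvc, eventually_ge_atTop 1] with I h hI
    exact abs_freelancerProb_sub_negMulLog_le h.1 (h.2.trans_lt hc1) hI
  simpa using hmain.add herr

/-- if `u(I) ∈ (0,1)` solves `(λ/μ) ∑_{i=1}^I u^i = 1` and
`P_I = ∑_{i=1}^{I-1} (1/i) u(I)^i (1−u(I)) + (1/I) u(I)^I`, then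
`P_I → −(λ/(λ+μ)) ln(λ/(λ+μ))` as `I → ∞`. -/
theorem freelancer_prob_tendsto (lam mu : ℝ) (hlam : 0 < lam) (hmu : 0 < mu)
    (u : ℕ → ℝ)
    (hu : ∀ I : ℕ, 1 ≤ I → 1 < lam * I / mu →
      u I ∈ Set.Ioo (0 : ℝ) 1 ∧ (lam / mu) * ∑ i ∈ Finset.Icc 1 I, u I ^ i = 1) :
    Tendsto
      (fun I : ℕ =>
        (∑ i ∈ Finset.Icc 1 (I - 1), (1 / (i : ℝ)) * u I ^ i * (1 - u I))
          + (1 / (I : ℝ)) * u I ^ I)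
      atTop (nhds (-(lam / (lam + mu)) * Real.log (lam / (lam + mu)))) := by
  have ha : 0 < lam / mu := div_pos hlam hmu
  have hroot : ∀ᶠ I : ℕ in atTop,
      u I ∈ Ioo 0 1 ∧ lam / mu * ∑ i ∈ Finset.Icc 1 I, u I ^ i = 1 := by
    filter_upwards [eventually_ge_atTop 1,
      tendsto_natCast_atTop_atTop.eventually_gt_atTop (mu / lam)] with I hI hIlarge
    refine hu I hI ?_
    rw [div_lt_iff₀ hlam] at hIlarge
    rw [one_lt_div hmu]
    linarith
  have hlim := tendsto_of_mul_sum_Icc_pow_eq_one ha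
    (hroot.mono fun _ h ↦ ⟨Ioo_subset_Icc_self h.1, h.2⟩)
  have hlt : 1 / (1 + lam / mu) < 1 := by rw [div_lt_one (by positivity)]; linarith
  have hx : 1 - 1 / (1 + lam / mu) = lam / (lam + mu) := by field_simp; ring
  have h := tendsto_freelancerProb (hroot.mono fun _ h ↦ h.1.1.le) hlim hlt
  rw [hx] at h
  exact h
end

section
/- Let z : [0,∞) → ℝ_+^I be continuous with inf_{t≥δ} ‖z(t)‖_1 > 0 for all δ > 0, and suppose w : [0,∞) → ℝ^I is differentiable on (0,∞), continuous at 0, with w(0)=0, w_1'(t) = −w_1(t)(μ_1/‖z(t)‖_1 + ν), and w_i'(t) = w_{i-1}(t) μ_{i-1}/‖z(t)‖_1 − w_i(t)(μ_i/‖z(t)‖_1 + ν) for i ≥ 2. Then w ≡ 0. -/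
open Set

/-! The square `f²` of a function with `f · f' ≤ 0` is antitone, so starting from `f a = 0` it
stays `0`. Each equation of the system has the form `w_i' = w_{i-1} μ_{i-1}/‖z‖₁ - k_i w_i` with
`k_i ≥ 0`; once `w_{i-1} ≡ 0` is known it reduces to `w_i' = -k_i w_i`, so `w_i ≡ 0` by induction
on `i`. -/

theorem eq_zero_of_mul_hasDerivAt_nonpos {f f' : ℝ → ℝ} {a : ℝ} (hfa : f a = 0)
    (hfc : ContinuousWithinAt f (Ici a) a) (hf : ∀ t > a, HasDerivAt f (f' t) t)
    (hsign : ∀ t > a, f t * f' t ≤ 0) :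
    ∀ t ≥ a, f t = 0 := by
  have hsq_cont : ContinuousOn (fun t => f t * f t) (Ici a) := by
    intro t ht
    rcases (mem_Ici.mp ht).eq_or_lt with rfl | hat
    · exact hfc.mul hfc
    · exact ((hf t hat).continuousAt.mul (hf t hat).continuousAt).continuousWithinAt
  have hsq_anti : AntitoneOn (fun t => f t * f t) (Ici a) := by
    refine antitoneOn_of_hasDerivWithinAt_nonpos (f' := fun t => 2 * (f t * f' t))
      (convex_Ici a) hsq_cont (fun t ht => ?_) (fun t ht => ?_)
    · rw [interior_Ici] at ht
      exact ((hf t ht).mul (hf t ht)).hasDerivWithinAt.congr_deriv (by ring)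
    · rw [interior_Ici] at ht
      linarith [hsign t ht]
  intro t ht
  have hle : f t * f t ≤ f a * f a := hsq_anti self_mem_Ici ht ht
  rw [hfa, mul_zero] at hle
  exact mul_self_eq_zero.mp (le_antisymm hle (mul_self_nonneg (f t)))

theorem eq_zero_of_hasDerivAt_neg_mul {f k : ℝ → ℝ} {a : ℝ} (hfa : f a = 0)
    (hfc : ContinuousWithinAt f (Ici a) a) (hf : ∀ t > a, HasDerivAt f (-f t * k t) t)
    (hk : ∀ t > a, 0 ≤ k t) :
    ∀ t ≥ a, f t = 0 :=
  eq_zero_of_mul_hasDerivAt_nonpos hfa hfc hf fun t ht => by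
    nlinarith [mul_nonneg (mul_self_nonneg (f t)) (hk t ht)]

theorem linearized_uniqueness_general (n : ℕ) (ν : ℝ) (hν : 0 < ν)
    (μ : Fin (n + 1) → ℝ) (hμ : ∀ i, 0 < μ i)
    (z : ℝ → Fin (n + 1) → ℝ)
    (hznn : ∀ t ≥ (0 : ℝ), ∀ i, 0 ≤ z t i)
    (w : ℝ → Fin (n + 1) → ℝ)
    (hw0 : ∀ i, w 0 i = 0)
    (hwc : ∀ i, ContinuousWithinAt (fun t => w t i) (Set.Ici 0) 0)
    (hd0 : ∀ t > (0 : ℝ),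
      HasDerivAt (fun s => w s 0) (-(w t 0) * (μ 0 / (∑ i, z t i) + ν)) t)
    (hdi : ∀ t > (0 : ℝ), ∀ i : Fin (n + 1), i ≠ 0 →
      HasDerivAt (fun s => w s i)
        (w t (i - 1) * μ (i - 1) / (∑ j, z t j) - w t i * (μ i / (∑ j, z t j) + ν)) t) :
    ∀ t ≥ (0 : ℝ), ∀ i, w t i = 0 := by
  have hrate : ∀ j, ∀ t > (0 : ℝ), 0 ≤ μ j / (∑ i, z t i) + ν := fun j t ht =>
    add_nonneg (div_nonneg (hμ j).le (Finset.sum_nonneg fun i _ => hznn t ht.le i)) hν.le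
  suffices h : ∀ i, ∀ t ≥ (0 : ℝ), w t i = 0 from fun t ht i => h i t ht
  intro i
  induction i using Fin.induction with
  | zero => exact eq_zero_of_hasDerivAt_neg_mul (hw0 0) (hwc 0) hd0 (hrate 0)
  | succ i ih =>
    refine eq_zero_of_hasDerivAt_neg_mul (hw0 _) (hwc _) (fun t ht => ?_) (hrate i.succ)
    have hpred : i.succ - 1 = i.castSucc := by rw [sub_eq_iff_eq_add, Fin.coeSucc_eq_succ]
    have hD := hdi t ht i.succ i.succ_ne_zero
    rw [hpred, ih t ht.le] at hD
    convert hD using 1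
    ring

/-- if `z : [0,∞) → ℝ_+^I` is continuous with `‖z‖₁` bounded away from `0`
on `[δ,∞)` for each `δ > 0`, and `w` solves the linear ODE system
`w_1' = −w_1(μ_1/‖z‖₁ + ν)`, `w_i' = w_{i-1} μ_{i-1}/‖z‖₁ − w_i(μ_i/‖z‖₁ + ν)` on `(0,∞)`,
is continuous at `0` with `w(0) = 0`, then `w ≡ 0` on `[0,∞)`. -/
theorem linearized_uniqueness (n : ℕ) (ν : ℝ) (hν : 0 < ν)
    (μ : Fin (n + 1) → ℝ) (hμ : ∀ i, 0 < μ i)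
    (z : ℝ → Fin (n + 1) → ℝ)
    (hzc : ∀ i, ContinuousOn (fun t => z t i) (Set.Ici 0))
    (hznn : ∀ t ≥ (0 : ℝ), ∀ i, 0 ≤ z t i)
    (hzinf : ∀ δ > (0 : ℝ), ∃ ε > (0 : ℝ), ∀ t ≥ δ, ε ≤ ∑ i, z t i)
    (w : ℝ → Fin (n + 1) → ℝ)
    (hw0 : ∀ i, w 0 i = 0)
    (hwc : ∀ i, ContinuousWithinAt (fun t => w t i) (Set.Ici 0) 0)
    (hd0 : ∀ t > (0 : ℝ),
      HasDerivAt (fun s => w s 0) (-(w t 0) * (μ 0 / (∑ i, z t i) + ν)) t)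
    (hdi : ∀ t > (0 : ℝ), ∀ i : Fin (n + 1), i ≠ 0 →
      HasDerivAt (fun s => w s i)
        (w t (i - 1) * μ (i - 1) / (∑ j, z t j) - w t i * (μ i / (∑ j, z t j) + ν)) t) :
    ∀ t ≥ (0 : ℝ), ∀ i, w t i = 0 :=
  linearized_uniqueness_general n ν hν μ hμ z hznn w hw0 hwc hd0 hdi
end

section
/- Let B_1,...,B_I, D be mutually independent random variables, B_l ~ Exp(μ_l), D ~ Exp(ν). For c > 0, the function g(c) := λ E[min{c(B_1 + ... + B_I), D}] − c is strictly monotone in the sense that g(c)/c is strictly decreasing, and under the overload assumption λ Σ 1/μ_i > 1, the equation c = λ E[min{c(B_1+...+B_I), D}] has a unique positive solution. -/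
/-!
Since `min (c S) D = c · min S (D / c)`, one has `g(c) / c = λ E[min (S, D / c)] - 1`. The map
`c ↦ E[min (S, D / c)]` is continuous on `(0, ∞)` by dominated convergence (it is bounded by `S`),
tends to `E S = ∑ 1/μ_i` as `c → 0⁺` and to `0` as `c → ∞`. It is strictly decreasing because the
integrand strictly decreases on `{D < c S}`, an event of positive probability: `S` and `D` are
independent, `S > 0` with positive probability and `D` charges every interval `[0, a]`. Under the
overload assumption it therefore crosses `1/λ` exactly once, at the unique fixed point.
-/

open MeasureTheory ProbabilityTheory Set Filter Topology Real

section Exponential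

variable {r : ℝ}

-- The exponent `2 - 1` is written as in `integral_rpow_mul_exp_neg_mul_Ioi`.
lemma exponentialPDFReal_mul_eq_indicator (x : ℝ) :
    exponentialPDFReal r x * x =
      (Ioi 0).indicator (fun t ↦ r * (t ^ ((2 : ℝ) - 1) * exp (-(r * t)))) x := by
  rcases lt_trichotomy x 0 with hx | rfl | hx
  · simp [exponentialPDFReal, gammaPDFReal, hx.not_ge, hx.not_gt]
  · simp
  · norm_num [exponentialPDFReal, gammaPDFReal, hx, hx.le]
    ring

lemma integral_exponentialPDFReal_mul_id (hr : 0 < r) :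
    ∫ x, exponentialPDFReal r x * x = 1 / r := by
  simp_rw [exponentialPDFReal_mul_eq_indicator, integral_indicator measurableSet_Ioi]
  rw [integral_const_mul, integral_rpow_mul_exp_neg_mul_Ioi two_pos hr, Real.Gamma_two,
    Real.rpow_two]
  field_simp

lemma expMeasure_eq_withDensity (r : ℝ) :
    expMeasure r = volume.withDensity (fun x ↦ ENNReal.ofReal (exponentialPDFReal r x)) := rfl

lemma integrable_expMeasure_iff (hr : 0 < r) {g : ℝ → ℝ} :
    Integrable g (expMeasure r) ↔ Integrable (fun x ↦ exponentialPDFReal r x * g x) := by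
  rw [expMeasure_eq_withDensity, integrable_withDensity_iff_integrable_smul'
    (measurable_exponentialPDFReal r).ennreal_ofReal (ae_of_all _ fun _ ↦ ENNReal.ofReal_lt_top)]
  simp [ENNReal.toReal_ofReal (exponentialPDFReal_nonneg hr _)]

lemma integral_expMeasure (hr : 0 < r) (g : ℝ → ℝ) :
    ∫ x, g x ∂expMeasure r = ∫ x, exponentialPDFReal r x * g x := by
  rw [expMeasure_eq_withDensity, integral_withDensity_eq_integral_toReal_smul
    (measurable_exponentialPDFReal r).ennreal_ofReal (ae_of_all _ fun _ ↦ ENNReal.ofReal_lt_top)]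
  simp [ENNReal.toReal_ofReal (exponentialPDFReal_nonneg hr _)]

lemma integral_id_expMeasure (hr : 0 < r) : ∫ x, x ∂expMeasure r = 1 / r :=
  (integral_expMeasure hr id).trans (integral_exponentialPDFReal_mul_id hr)

lemma integrable_id_expMeasure (hr : 0 < r) : Integrable id (expMeasure r) :=
  (integrable_expMeasure_iff hr).2 <| Integrable.of_integral_ne_zero <| by
    simpa [integral_exponentialPDFReal_mul_id hr] using hr.ne'

lemma expMeasure_Iic (hr : 0 < r) (x : ℝ) :
    expMeasure r (Iic x) = ENNReal.ofReal (if 0 ≤ x then 1 - exp (-(r * x)) else 0) := by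
  have := isProbabilityMeasure_expMeasure hr
  rw [← ofReal_cdf, cdf_expMeasure_eq hr]

end Exponential

namespace ProbabilityTheory.HasLaw

variable {Ω : Type*} [MeasurableSpace Ω] {P : Measure Ω} {X : Ω → ℝ} {r : ℝ}

lemma measure_preimage_Iic_of_expMeasure (hX : HasLaw X (expMeasure r) P) (hr : 0 < r) (x : ℝ) :
    P (X ⁻¹' Iic x) = ENNReal.ofReal (if 0 ≤ x then 1 - exp (-(r * x)) else 0) := by
  rw [← Measure.map_apply_of_aemeasurable hX.aemeasurable measurableSet_Iic, hX.map_eq,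
    expMeasure_Iic hr]

lemma ae_pos_of_expMeasure (hX : HasLaw X (expMeasure r) P) (hr : 0 < r) :
    ∀ᵐ ω ∂P, 0 < X ω := by
  have h0 : P (X ⁻¹' Iic 0) = 0 := by simp [hX.measure_preimage_Iic_of_expMeasure hr]
  exact (measure_eq_zero_iff_ae_notMem.1 h0).mono fun _ h ↦ not_le.1 h

lemma measure_preimage_Iic_ne_zero_of_expMeasure (hX : HasLaw X (expMeasure r) P) (hr : 0 < r)
    {a : ℝ} (ha : 0 < a) : P (X ⁻¹' Iic a) ≠ 0 := by
  rw [hX.measure_preimage_Iic_of_expMeasure hr, if_pos ha.le]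
  simpa using mul_pos hr ha

lemma integrable_of_expMeasure (hX : HasLaw X (expMeasure r) P) (hr : 0 < r) : Integrable X P := by
  have h := integrable_id_expMeasure hr
  rwa [← hX.map_eq, integrable_map_measure aestronglyMeasurable_id hX.aemeasurable] at h

lemma integral_eq_one_div_of_expMeasure (hX : HasLaw X (expMeasure r) P) (hr : 0 < r) :
    ∫ ω, X ω ∂P = 1 / r := by
  rw [← integral_id_expMeasure hr]
  exact hX.integral_eq

end ProbabilityTheory.HasLaw

lemma IsPreconnected.existsUnique_eq_of_injOn {X α : Type*} [TopologicalSpace X] [LinearOrder α]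
    [TopologicalSpace α] [OrderClosedTopology α] {s : Set X} (hs : IsPreconnected s) {f : X → α}
    (hf : ContinuousOn f s) (hinj : InjOn f s) {l₁ l₂ : Filter X} [l₁.NeBot] [l₂.NeBot]
    (hl₁ : l₁ ≤ 𝓟 s) (hl₂ : l₂ ≤ 𝓟 s) {y : α} (h₁ : ∀ᶠ x in l₁, f x ≤ y)
    (h₂ : ∀ᶠ x in l₂, y ≤ f x) : ∃! x, x ∈ s ∧ f x = y := by
  obtain ⟨x, hx, hfx⟩ := hs.intermediate_value₂_eventually₂ hl₁ hl₂ hf continuousOn_const h₁ h₂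
  exact ⟨x, ⟨hx, hfx⟩, fun x' ⟨hx', hfx'⟩ ↦ hinj hx' hx (hfx'.trans hfx.symm)⟩

lemma integral_lt_integral_of_ae_le_of_measure_setOfPred_lt_ne_zero {α : Type*} [MeasurableSpace α]
    {μ : Measure α} {f g : α → ℝ} (hf : Integrable f μ) (hg : Integrable g μ) (hle : f ≤ᵐ[μ] g)
    (hlt : μ {x | f x < g x} ≠ 0) : ∫ x, f x ∂μ < ∫ x, g x ∂μ := by
  rw [← sub_pos, ← integral_sub hg hf, integral_pos_iff_support_of_nonneg_ae
    (hle.mono fun _ ↦ sub_nonneg.2) (hg.sub hf)]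
  exact pos_iff_ne_zero.2 (mt (measure_mono_null fun x hx ↦ (sub_pos.2 hx).ne') hlt)

lemma exists_measure_preimage_Ioi_ne_zero {Ω : Type*} [MeasurableSpace Ω] {P : Measure Ω}
    {S : Ω → ℝ} (h : P {ω | 0 < S ω} ≠ 0) : ∃ s > 0, P (S ⁻¹' Ioi s) ≠ 0 := by
  by_contra! H
  refine h (measure_mono_null (fun ω (hω : 0 < S ω) ↦ ?_)
    (measure_iUnion_null fun k : ℕ ↦ H (1 / (k + 1)) Nat.one_div_pos_of_nat))
  obtain ⟨k, hk⟩ := exists_nat_one_div_lt hω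
  exact mem_iUnion.2 ⟨k, hk⟩

namespace ProbabilityTheory

variable {Ω : Type*} [MeasurableSpace Ω] {P : Measure Ω} {S D : Ω → ℝ}

lemma IndepFun.measure_lt_mul_ne_zero (hSD : IndepFun S D P) (hS : P {ω | 0 < S ω} ≠ 0)
    (hD : ∀ a > 0, P (D ⁻¹' Iic a) ≠ 0) {c : ℝ} (hc : 0 < c) :
    P {ω | D ω < c * S ω} ≠ 0 := by
  obtain ⟨s, hs, hPs⟩ := exists_measure_preimage_Ioi_ne_zero hS
  refine fun h0 ↦ mul_ne_zero hPs (hD (c * s) (mul_pos hc hs)) ?_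
  rw [← hSD.measure_inter_preimage_eq_mul _ _ measurableSet_Ioi measurableSet_Iic]
  exact measure_mono_null (fun ω ⟨hωS, hωD⟩ ↦ lt_of_le_of_lt hωD
    (mul_lt_mul_of_pos_left hωS hc)) h0

lemma iIndepFun.indepFun_sum_of_cons {β : Type*} [MeasurableSpace β] [AddCommMonoid β]
    [MeasurableAdd₂ β] {n : ℕ} {D : Ω → β} {B : Fin n → Ω → β}
    (h : iIndepFun (Fin.cons D B : Fin (n + 1) → Ω → β) P) (hD : Measurable D)
    (hB : ∀ l, Measurable (B l)) : IndepFun (fun ω ↦ ∑ l, B l ω) D P := by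
  have hmeas : ∀ i, Measurable ((Fin.cons D B : Fin (n + 1) → Ω → β) i) :=
    Fin.cases hD hB
  have := h.indepFun_finsetSum_of_notMem hmeas (s := Finset.univ.map (Fin.succEmb n))
    (i := 0) (by simp [Fin.succ_ne_zero])
  simpa [Finset.sum_map, Finset.sum_fn] using this

end ProbabilityTheory

section TruncatedMean

variable {Ω : Type*} [MeasurableSpace Ω] {P : Measure Ω} {S D : Ω → ℝ}

lemma integral_min_mul_eq {c : ℝ} (hc : 0 < c) :
    ∫ ω, min (c * S ω) (D ω) ∂P = c * ∫ ω, min (S ω) (D ω / c) ∂P := by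
  rw [← integral_const_mul]
  congr 1 with ω
  rw [mul_min_of_nonneg _ _ hc.le, mul_div_cancel₀ _ hc.ne']

lemma ae_norm_min_div_le (hS : 0 ≤ᵐ[P] S) (hD : 0 ≤ᵐ[P] D) {c : ℝ} (hc : 0 ≤ c) :
    ∀ᵐ ω ∂P, ‖min (S ω) (D ω / c)‖ ≤ S ω := by
  filter_upwards [hS, hD] with ω hSω hDω
  rw [Real.norm_of_nonneg (le_min hSω (div_nonneg hDω hc))]
  exact min_le_left _ _

lemma aestronglyMeasurable_min_div (hSm : AEStronglyMeasurable S P)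
    (hDm : AEStronglyMeasurable D P) (c : ℝ) :
    AEStronglyMeasurable (fun ω ↦ min (S ω) (D ω / c)) P := by
  fun_prop

variable (hSi : Integrable S P) (hS : 0 ≤ᵐ[P] S) (hDm : AEStronglyMeasurable D P)
include hSi hS hDm

lemma integrable_min_div (hD : 0 ≤ᵐ[P] D) {c : ℝ} (hc : 0 ≤ c) :
    Integrable (fun ω ↦ min (S ω) (D ω / c)) P :=
  hSi.mono' (aestronglyMeasurable_min_div hSi.1 hDm c) (ae_norm_min_div_le hS hD hc)

lemma continuousOn_integral_min_div (hD : 0 ≤ᵐ[P] D) :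
    ContinuousOn (fun c ↦ ∫ ω, min (S ω) (D ω / c) ∂P) (Ioi 0) :=
  continuousOn_of_dominated (fun c _ ↦ aestronglyMeasurable_min_div hSi.1 hDm c)
    (fun _ hc ↦ ae_norm_min_div_le hS hD (le_of_lt hc)) hSi
    (ae_of_all _ fun _ ↦ ContinuousOn.inf continuousOn_const
      (continuousOn_const.div continuousOn_id fun _ hc ↦ ne_of_gt hc))

lemma strictAntiOn_integral_min_div (hD : ∀ᵐ ω ∂P, 0 < D ω)
    (hSD : ∀ c > 0, P {ω | D ω < c * S ω} ≠ 0) :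
    StrictAntiOn (fun c ↦ ∫ ω, min (S ω) (D ω / c) ∂P) (Ioi 0) := by
  intro c₁ hc₁ c₂ hc₂ h
  have hD0 : 0 ≤ᵐ[P] D := hD.mono fun _ ↦ le_of_lt
  refine integral_lt_integral_of_ae_le_of_measure_setOfPred_lt_ne_zero
    (integrable_min_div hSi hS hDm hD0 (le_of_lt hc₂))
    (integrable_min_div hSi hS hDm hD0 (le_of_lt hc₁)) ?_ ?_
  · filter_upwards [hD0] with ω hDω
    exact min_le_min_left _ (div_le_div_of_nonneg_left hDω hc₁ h.le)
  · refine fun h0 ↦ hSD c₂ hc₂ (measure_mono_null_ae ?_ h0)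
    filter_upwards [hD] with ω hDω hω
    have hlt : D ω / c₂ < S ω := (div_lt_iff₀' hc₂).2 hω
    change min (S ω) (D ω / c₂) < min (S ω) (D ω / c₁)
    rw [min_eq_right hlt.le]
    exact lt_min hlt (div_lt_div_of_pos_left hDω hc₁ h)

lemma tendsto_integral_min_div_nhdsGT_zero (hD : ∀ᵐ ω ∂P, 0 < D ω) :
    Tendsto (fun c ↦ ∫ ω, min (S ω) (D ω / c) ∂P) (𝓝[>] 0) (𝓝 (∫ ω, S ω ∂P)) := by
  refine tendsto_integral_filter_of_dominated_convergence S
    (Eventually.of_forall fun c ↦ aestronglyMeasurable_min_div hSi.1 hDm c)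
    (eventually_mem_nhdsWithin.mono fun c hc ↦
      ae_norm_min_div_le hS (hD.mono fun _ ↦ le_of_lt) (le_of_lt hc)) hSi ?_
  filter_upwards [hD] with ω hDω
  have : Tendsto (fun c ↦ D ω / c) (𝓝[>] 0) atTop :=
    tendsto_inv_nhdsGT_zero.const_mul_atTop hDω
  exact tendsto_const_nhds.congr' ((this.eventually_ge_atTop (S ω)).mono fun c hc ↦
    (min_eq_left hc).symm)

lemma tendsto_integral_min_div_atTop (hD : 0 ≤ᵐ[P] D) :
    Tendsto (fun c ↦ ∫ ω, min (S ω) (D ω / c) ∂P) atTop (𝓝 0) := by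
  rw [← integral_zero Ω ℝ]
  refine tendsto_integral_filter_of_dominated_convergence S
    (Eventually.of_forall fun c ↦ aestronglyMeasurable_min_div hSi.1 hDm c)
    ((eventually_ge_atTop 0).mono fun c hc ↦ ae_norm_min_div_le hS hD hc) hSi ?_
  filter_upwards [hS] with ω hSω
  have := (tendsto_const_nhds (x := S ω)).min
    ((tendsto_const_nhds (x := D ω)).div_atTop tendsto_id)
  rwa [min_eq_right (by exact hSω)] at this

lemma strictAntiOn_integral_min_mul_sub_div (hD : ∀ᵐ ω ∂P, 0 < D ω)
    (hSD : ∀ c > 0, P {ω | D ω < c * S ω} ≠ 0) {lam : ℝ} (hlam : 0 < lam) :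
    StrictAntiOn (fun c ↦ (lam * (∫ ω, min (c * S ω) (D ω) ∂P) - c) / c) (Ioi 0) := by
  refine StrictAntiOn.congr (f₁ := fun c ↦ lam * ∫ ω, min (S ω) (D ω / c) ∂P - 1)
    (fun a ha b hb hab ↦ ?_) fun c (hc : 0 < c) ↦ ?_
  · exact sub_lt_sub_right (mul_lt_mul_of_pos_left
      (strictAntiOn_integral_min_div hSi hS hDm hD hSD ha hb hab) hlam) 1
  · rw [integral_min_mul_eq hc]
    field_simp

lemma existsUnique_eq_mul_integral_min_mul (hD : ∀ᵐ ω ∂P, 0 < D ω)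
    (hSD : ∀ c > 0, P {ω | D ω < c * S ω} ≠ 0) {lam : ℝ} (hlam : 0 < lam)
    (hSlam : 1 < lam * ∫ ω, S ω ∂P) :
    ∃! c, 0 < c ∧ c = lam * ∫ ω, min (c * S ω) (D ω) ∂P := by
  have hfix (c : ℝ) : (0 < c ∧ c = lam * ∫ ω, min (c * S ω) (D ω) ∂P) ↔
      (c ∈ Ioi 0 ∧ ∫ ω, min (S ω) (D ω / c) ∂P = lam⁻¹) := by
    refine and_congr_right fun (hc : 0 < c) ↦ ?_
    rw [integral_min_mul_eq hc]
    field_simp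
    exact eq_comm
  have hD0 : 0 ≤ᵐ[P] D := hD.mono fun _ ↦ le_of_lt
  rw [existsUnique_congr hfix]
  exact isPreconnected_Ioi.existsUnique_eq_of_injOn (continuousOn_integral_min_div hSi hS hDm hD0)
    (strictAntiOn_integral_min_div hSi hS hDm hD hSD).injOn (l₁ := atTop) (l₂ := 𝓝[>] 0)
    (le_principal_iff.2 (Ioi_mem_atTop 0)) inf_le_right
    ((tendsto_integral_min_div_atTop hSi hS hDm hD0).eventually
      (eventually_lt_nhds (inv_pos.2 hlam)) |>.mono fun _ ↦ le_of_lt)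
    ((tendsto_integral_min_div_nhdsGT_zero hSi hS hDm hD).eventually
      (eventually_gt_nhds ((inv_lt_iff_one_lt_mul₀' hlam).2 hSlam)) |>.mono fun _ ↦ le_of_lt)

end TruncatedMean

/-- with `B_l ~ Exp(μ_l)`, `D ~ Exp(ν)` mutually independent and
`S = B_1 + ... + B_I`, the function `g(c) = λ E[min(cS, D)] − c` has `g(c)/c` strictly
decreasing on `(0,∞)`, and under overload `λ ∑ 1/μ_i > 1` the equation
`c = λ E[min(cS, D)]` has a unique positive solution. -/
theorem fixed_point_norm_unique
    {Ω : Type*} [MeasurableSpace Ω] (P : Measure Ω) [IsProbabilityMeasure P]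
    (n : ℕ) (lam ν : ℝ) (hlam : 0 < lam) (hν : 0 < ν)
    (μ : Fin (n + 1) → ℝ) (hμ : ∀ i, 0 < μ i)
    (hover : 1 < lam * ∑ i, 1 / μ i)
    (B : Fin (n + 1) → Ω → ℝ) (D : Ω → ℝ)
    (hmB : ∀ l, Measurable (B l)) (hmD : Measurable D)
    (hindep : iIndepFun
      (Fin.cons D B : Fin (n + 2) → Ω → ℝ) P)
    (hB : ∀ l, Measure.map (B l) P = expMeasure (μ l))
    (hD : Measure.map D P = expMeasure ν) :
    StrictAntiOn
      (fun c : ℝ => (lam * (∫ ω, min (c * ∑ l, B l ω) (D ω) ∂P) - c) / c)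
      (Set.Ioi 0) ∧
    ∃! c : ℝ, 0 < c ∧ c = lam * ∫ ω, min (c * ∑ l, B l ω) (D ω) ∂P := by
  have hBlaw (l) : HasLaw (B l) (expMeasure (μ l)) P := ⟨(hmB l).aemeasurable, hB l⟩
  have hDlaw : HasLaw D (expMeasure ν) P := ⟨hmD.aemeasurable, hD⟩
  have hBi (l) : Integrable (B l) P := (hBlaw l).integrable_of_expMeasure (hμ l)
  have hSi : Integrable (fun ω ↦ ∑ l, B l ω) P := integrable_finsetSum _ fun l _ ↦ hBi l
  have hSmean : ∫ ω, ∑ l, B l ω ∂P = ∑ l, 1 / μ l := by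
    rw [integral_finsetSum _ fun l _ ↦ hBi l]
    exact Finset.sum_congr rfl fun l _ ↦ (hBlaw l).integral_eq_one_div_of_expMeasure (hμ l)
  have hSpos : ∀ᵐ ω ∂P, 0 < ∑ l, B l ω := by
    filter_upwards [ae_all_iff.2 fun l ↦ (hBlaw l).ae_pos_of_expMeasure (hμ l)] with ω h
    exact Finset.sum_pos (fun l _ ↦ h l) Finset.univ_nonempty
  have hDpos := hDlaw.ae_pos_of_expMeasure hν
  have hSD (c : ℝ) (hc : 0 < c) : P {ω | D ω < c * ∑ l, B l ω} ≠ 0 :=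
    (hindep.indepFun_sum_of_cons hmD hmB).measure_lt_mul_ne_zero
      (frequently_ae_iff.1 hSpos.frequently)
      (fun _ ha ↦ hDlaw.measure_preimage_Iic_ne_zero_of_expMeasure hν ha) hc
  have hS0 : 0 ≤ᵐ[P] fun ω ↦ ∑ l, B l ω := hSpos.mono fun _ ↦ le_of_lt
  exact ⟨strictAntiOn_integral_min_mul_sub_div hSi hS0 hmD.aestronglyMeasurable hDpos hSD hlam,
    existsUnique_eq_mul_integral_min_mul hSi hS0 hmD.aestronglyMeasurable hDpos hSD hlam
      (hSmean ▸ hover)⟩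
end

section
/- The norm of the unique invariant fluid model solution satisfies ‖z*‖_1 = λ E[min{‖z*‖_1 (B_1 + ... + B_I), D}], where B_l ~ Exp(μ_l) and D ~ Exp(ν) are mutually independent. -/
/-!
Write `S = ‖z‖₁` and `T = B₁ + ⋯ + B_I`. For `a ≥ 0`,
`E[min(a, D)] = ∫₀^a P(D > t) dt = (1 - e^{-νa}) / ν`, so by independence the right-hand
side is `λ (1 - E[e^{-νST}]) / ν = λ (1 - ∏ μ_l / (μ_l + νS)) / ν`. In the fluid equations
the outflow `μ_i z_i / S` of station `i` is its inflow times `μ_i / (μ_i + νS)`, so the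
outflow of the last station is `λ ∏ μ_l / (μ_l + νS)`, while summing the equations
telescopes to `νS = λ - (outflow of the last station)`.
-/

open MeasureTheory ProbabilityTheory Set Real

namespace Fin

variable {M : Type*}

theorem sum_eq_sub_last_of_forall_succ [AddCommGroup M] {n : ℕ} {a : M}
    {w x : Fin (n + 1) → M} (h0 : x 0 = a - w 0)
    (hsucc : ∀ j : Fin n, x j.succ = w j.castSucc - w j.succ) :
    ∑ i, x i = a - w (last n) := by
  induction n with
  | zero => simp [h0]
  | succ n ih =>
    rw [sum_univ_castSucc, ih (w := fun i => w i.castSucc)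
      (by simpa only [castSucc_zero] using h0)
      (fun j => by simpa only [succ_castSucc] using hsucc j.castSucc), ← succ_last, hsucc]
    abel

theorem last_eq_mul_prod_of_forall_succ [CommMonoid M] {n : ℕ} {a : M}
    {w ρ : Fin (n + 1) → M} (h0 : w 0 = a * ρ 0)
    (hsucc : ∀ j : Fin n, w j.succ = w j.castSucc * ρ j.succ) :
    w (last n) = a * ∏ i, ρ i := by
  induction n with
  | zero => simp [h0]
  | succ n ih =>
    rw [prod_univ_castSucc, ← succ_last, hsucc, ← mul_assoc,
      ← ih (w := fun i => w i.castSucc) (ρ := fun i => ρ i.castSucc)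
      (by simpa only [castSucc_zero] using h0)
      (fun j => by simpa only [succ_castSucc] using hsucc j.castSucc)]

end Fin

theorem outflow_eq_of_balance {S ν μ z u : ℝ} (hS : S ≠ 0) (hμν : μ + ν * S ≠ 0)
    (h : u - μ * z / S - ν * z = 0) : μ * z / S = u * (μ / (μ + ν * S)) := by
  rw [mul_div_assoc', eq_div_iff hμν]
  linear_combination (-μ) * h + μ * z * ν * mul_inv_cancel₀ hS

theorem mul_sum_eq_of_tandem_balance {n : ℕ} {lam ν S : ℝ} {μ z : Fin (n + 1) → ℝ}
    (hS : S ≠ 0) (hμν : ∀ i, μ i + ν * S ≠ 0) (h0 : lam - μ 0 * z 0 / S - ν * z 0 = 0)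
    (hsucc : ∀ j : Fin n,
      μ j.castSucc * z j.castSucc / S - μ j.succ * z j.succ / S - ν * z j.succ = 0) :
    ν * ∑ i, z i = lam * (1 - ∏ i, μ i / (μ i + ν * S)) := by
  set w : Fin (n + 1) → ℝ := fun i => μ i * z i / S
  have hw : w (Fin.last n) = lam * ∏ i, μ i / (μ i + ν * S) :=
    Fin.last_eq_mul_prod_of_forall_succ (outflow_eq_of_balance hS (hμν 0) h0)
      fun j => outflow_eq_of_balance hS (hμν _) (hsucc j)
  rw [Finset.mul_sum, Fin.sum_eq_sub_last_of_forall_succ (a := lam) (w := w) (by linarith [h0])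
    (fun j => by linarith [hsucc j]), hw]
  ring

namespace ProbabilityTheory

lemma ae_nonneg_expMeasure (r : ℝ) : ∀ᵐ y ∂expMeasure r, 0 ≤ y := by
  simp only [ae_iff, not_le]
  change volume.withDensity (exponentialPDF r) (Iio 0) = 0
  rw [withDensity_apply _ measurableSet_Iio]
  exact lintegral_exponentialPDF_of_nonpos le_rfl

lemma expMeasure_Ioi {r t : ℝ} (hr : 0 < r) (ht : 0 ≤ t) :
    expMeasure r (Ioi t) = ENNReal.ofReal (exp (-r * t)) := by
  have := isProbabilityMeasure_expMeasure hr
  have hle : exp (-(r * t)) ≤ 1 := exp_le_one_iff.2 (by nlinarith)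
  rw [neg_mul, ← compl_Iic, prob_compl_eq_one_sub measurableSet_Iic, ← ofReal_cdf,
    cdf_expMeasure_eq hr, if_pos ht, ← ENNReal.ofReal_one, ← ENNReal.ofReal_sub _ (by linarith),
    sub_sub_cancel]

lemma lintegral_min_expMeasure {r a : ℝ} (hr : 0 < r) (ha : 0 ≤ a) :
    ∫⁻ y, ENNReal.ofReal (min a y) ∂expMeasure r
      = ENNReal.ofReal ((1 - exp (-r * a)) / r) := by
  have hnn : 0 ≤ᵐ[expMeasure r] fun y => min a y :=
    (ae_nonneg_expMeasure r).mono fun y hy => le_min ha hy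
  have htail : ∀ t ∈ Ioi (0 : ℝ), expMeasure r {y | t < min a y}
      = (Iio a).indicator (fun t => ENNReal.ofReal (exp (-r * t))) t := by
    intro t ht
    by_cases hta : t < a
    · rw [indicator_of_mem (mem_Iio.2 hta), ← expMeasure_Ioi hr (le_of_lt ht)]
      congr 1
      ext y
      simp [hta]
    · rw [indicator_of_notMem (mt mem_Iio.1 hta)]
      simp [hta]
  have hint : IntegrableOn (fun t => exp (-r * t)) (Ioo 0 a) :=
    (exp_neg_integrableOn_Ioc hr).mono_set Ioo_subset_Ioc_self |>.congr_fun
      (fun t _ => by simp [neg_mul]) measurableSet_Ioo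
  have hderiv : ∀ t, HasDerivAt (fun t => -exp (-r * t) / r) (exp (-r * t)) t := fun t => by
    have := (hasDerivAt_neg_exp_mul_exp (r := r) (x := t)).div_const r
    simpa [neg_mul, mul_div_cancel_left₀ _ hr.ne'] using this
  rw [lintegral_eq_lintegral_meas_lt _ hnn (by fun_prop),
    setLIntegral_congr_fun measurableSet_Ioi htail, lintegral_indicator measurableSet_Iio,
    Measure.restrict_restrict measurableSet_Iio, Iio_inter_Ioi,
    ← ofReal_integral_eq_lintegral_ofReal hint (ae_of_all _ fun t => (exp_pos _).le),
    ← integral_Ioc_eq_integral_Ioo, ← intervalIntegral.integral_of_le ha,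
    intervalIntegral.integral_eq_sub_of_hasDerivAt (fun t _ => hderiv t)
      ((by fun_prop : Continuous fun t => exp (-r * t)).intervalIntegrable _ _)]
  rw [mul_zero, exp_zero]
  congr 1
  ring

lemma mgf_id_expMeasure {r t : ℝ} (hr : 0 < r) (ht : t < r) :
    mgf id (expMeasure r) t = r / (r - t) := by
  have hrt : 0 < r - t := sub_pos.2 ht
  have hdens : ∀ x, exponentialPDF r x * ENNReal.ofReal (exp (t * x))
      = ENNReal.ofReal (r / (r - t)) * exponentialPDF (r - t) x := by
    intro x
    rcases le_or_gt 0 x with hx | hx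
    · rw [exponentialPDF_of_nonneg hx, exponentialPDF_of_nonneg hx,
        ← ENNReal.ofReal_mul (by positivity), ← ENNReal.ofReal_mul (by positivity)]
      congr 1
      rw [show exp (-((r - t) * x)) = exp (-(r * x)) * exp (t * x) by rw [← exp_add]; ring_nf]
      field_simp
    · simp [exponentialPDF_of_neg hx]
  have hlin :
      ∫⁻ x, ENNReal.ofReal (exp (t * x)) ∂expMeasure r = ENNReal.ofReal (r / (r - t)) := by
    change ∫⁻ x, _ ∂volume.withDensity (exponentialPDF r) = _
    have hm : ∀ q, Measurable (exponentialPDF q) :=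
      fun q => (measurable_exponentialPDFReal q).ennreal_ofReal
    rw [lintegral_withDensity_eq_lintegral_mul _ (hm r) (by fun_prop)]
    simp only [Pi.mul_apply, hdens]
    rw [lintegral_const_mul _ (hm _),
      lintegral_exponentialPDF_eq_one hrt, mul_one]
  rw [mgf, integral_eq_lintegral_of_nonneg_ae (ae_of_all _ fun x => (exp_pos _).le)
    (by fun_prop)]
  simp only [id_eq]
  rw [hlin, ENNReal.toReal_ofReal (by positivity)]

variable {Ω : Type*} [MeasurableSpace Ω] {P : Measure Ω}

lemma ae_nonneg_of_map_eq_expMeasure {X : Ω → ℝ} {r : ℝ} (hX : Measurable X)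
    (hlaw : P.map X = expMeasure r) : ∀ᵐ ω ∂P, 0 ≤ X ω :=
  ae_of_ae_map hX.aemeasurable (hlaw ▸ ae_nonneg_expMeasure r)

lemma mgf_of_map_eq_expMeasure {X : Ω → ℝ} {r t : ℝ} (hX : Measurable X)
    (hlaw : P.map X = expMeasure r) (hr : 0 < r) (ht : t < r) : mgf X P t = r / (r - t) := by
  rw [← mgf_id_map hX.aemeasurable, hlaw, mgf_id_expMeasure hr ht]

lemma integral_min_of_indepFun_expMeasure [IsProbabilityMeasure P] {X Y : Ω → ℝ} {ν : ℝ}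
    (hν : 0 < ν) (hX : Measurable X) (hY : Measurable Y) (hX0 : 0 ≤ᵐ[P] X)
    (hXY : IndepFun X Y P) (hlaw : P.map Y = expMeasure ν) :
    ∫ ω, min (X ω) (Y ω) ∂P = (1 - mgf X P (-ν)) / ν := by
  have := isProbabilityMeasure_expMeasure hν
  have hY0 := ae_nonneg_of_map_eq_expMeasure hY hlaw
  have hX0' : ∀ᵐ x ∂P.map X, 0 ≤ x := (ae_map_iff hX.aemeasurable measurableSet_Ici).2 hX0
  have hlaw2 : P.map (fun ω => (X ω, Y ω)) = (P.map X).prod (expMeasure ν) := by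
    rw [← hlaw]
    exact (indepFun_iff_map_prod_eq_prod_map_map hX.aemeasurable hY.aemeasurable).1 hXY
  have hlin : ∫⁻ ω, ENNReal.ofReal (min (X ω) (Y ω)) ∂P
      = ∫⁻ ω, ENNReal.ofReal ((1 - exp (-ν * X ω)) / ν) ∂P := by
    calc ∫⁻ ω, ENNReal.ofReal (min (X ω) (Y ω)) ∂P
        = ∫⁻ x, ∫⁻ y, ENNReal.ofReal (min x y) ∂expMeasure ν ∂P.map X := by
          rw [← lintegral_prod (fun p : ℝ × ℝ => ENNReal.ofReal (min p.1 p.2)) (by fun_prop),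
            ← hlaw2, lintegral_map (by fun_prop) (by fun_prop)]
      _ = ∫⁻ x, ENNReal.ofReal ((1 - exp (-ν * x)) / ν) ∂P.map X :=
          lintegral_congr_ae (hX0'.mono fun x hx => lintegral_min_expMeasure hν hx)
      _ = ∫⁻ ω, ENNReal.ofReal ((1 - exp (-ν * X ω)) / ν) ∂P :=
          lintegral_map (by fun_prop) hX
  have hnn : 0 ≤ᵐ[P] fun ω => (1 - exp (-ν * X ω)) / ν :=
    hX0.mono fun ω (hω : 0 ≤ X ω) => by
      have : exp (-ν * X ω) ≤ 1 := exp_le_one_iff.2 (by nlinarith)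
      exact div_nonneg (by linarith) hν.le
  have hint : Integrable (fun ω => exp (-ν * X ω)) P := by
    simpa [neg_mul, mul_neg] using
      integrable_exp_mul_of_le ν 0 hν.le hX.neg.aemeasurable (hX0.mono fun ω hω => by simpa)
  rw [integral_eq_lintegral_of_nonneg_ae (hX0.mp (hY0.mono fun ω h1 h2 => le_min h2 h1))
      (by fun_prop), hlin, ← integral_eq_lintegral_of_nonneg_ae hnn (by fun_prop),
    integral_div, integral_sub (integrable_const 1) hint, integral_const, mgf]
  simp

lemma iIndepFun.indepFun_sum_cons {n : ℕ} {D : Ω → ℝ} {B : Fin n → Ω → ℝ}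
    (h : iIndepFun (Fin.cons D B : Fin (n + 1) → Ω → ℝ) P) (hD : Measurable D)
    (hB : ∀ l, Measurable (B l)) : IndepFun (fun ω => ∑ l, B l ω) D P := by
  have hmeas : ∀ i, Measurable ((Fin.cons D B : Fin (n + 1) → Ω → ℝ) i) :=
    Fin.cases hD hB
  have := h.indepFun_finsetSum_of_notMem hmeas (s := Finset.univ.map (Fin.succEmb n))
    (i := 0) (by simp [Fin.succ_ne_zero])
  simpa [Finset.sum_map, Finset.sum_fn] using this

end ProbabilityTheory

theorem invariant_norm_fixed_point_general
    {Ω : Type*} [MeasurableSpace Ω] (P : Measure Ω) [IsProbabilityMeasure P]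
    (n : ℕ) (lam ν : ℝ) (hν : 0 < ν)
    (μ : Fin (n + 1) → ℝ) (hμ : ∀ i, 0 < μ i)
    (B : Fin (n + 1) → Ω → ℝ) (D : Ω → ℝ)
    (hmB : ∀ l, Measurable (B l)) (hmD : Measurable D)
    (hindep : iIndepFun
      (Fin.cons D B : Fin (n + 2) → Ω → ℝ) P)
    (hB : ∀ l, Measure.map (B l) P = expMeasure (μ l))
    (hD : Measure.map D P = expMeasure ν)
    (z : Fin (n + 1) → ℝ) (hz : ∀ i, 0 < z i)
    (heq0 : lam - μ 0 * z 0 / (∑ j, z j) - ν * z 0 = 0)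
    (heqi : ∀ i : Fin (n + 1), i ≠ 0 →
      μ (i - 1) * z (i - 1) / (∑ j, z j) - μ i * z i / (∑ j, z j) - ν * z i = 0) :
    (∑ j, z j) = lam * ∫ ω, min ((∑ j, z j) * ∑ l, B l ω) (D ω) ∂P := by
  set S := ∑ j, z j
  have hS : 0 < S := Finset.sum_pos (fun i _ => hz i) Finset.univ_nonempty
  have hpred : ∀ j : Fin n, j.succ - 1 = j.castSucc := fun j => by simp [sub_eq_iff_eq_add]
  have hbalance : ν * S = lam * (1 - ∏ i, μ i / (μ i + ν * S)) :=
    mul_sum_eq_of_tandem_balance hS.ne' (fun i => (add_pos (hμ i) (by positivity)).ne') heq0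
      fun j => by simpa only [hpred] using heqi j.succ (Fin.succ_ne_zero j)
  have hT0 : ∀ᵐ ω ∂P, 0 ≤ S * ∑ l, B l ω := by
    filter_upwards [ae_all_iff.2 fun l => ae_nonneg_of_map_eq_expMeasure (hmB l) (hB l)]
      with ω hω
    exact mul_nonneg hS.le (Finset.sum_nonneg fun l _ => hω l)
  have hmgf : mgf (fun ω => ∑ l, B l ω) P (S * -ν) = ∏ l, μ l / (μ l + ν * S) := by
    have hBindep : iIndepFun B P := hindep.precomp (g := Fin.succ) (Fin.succ_injective _)
    rw [← Finset.sum_fn, hBindep.mgf_sum hmB]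
    refine Finset.prod_congr rfl fun l _ => ?_
    rw [mgf_of_map_eq_expMeasure (hmB l) (hB l) (hμ l) (by nlinarith [hμ l])]
    ring
  rw [integral_min_of_indepFun_expMeasure hν (by fun_prop) hmD hT0
    ((hindep.indepFun_sum_cons hmD hmB).comp (measurable_const_mul S) measurable_id) hD,
    mgf_const_mul, hmgf, mul_div_assoc', ← hbalance, mul_div_cancel_left₀ S hν.ne']

/-- the norm of the invariant fluid model solution satisfies
`‖z*‖₁ = λ E[min(‖z*‖₁ (B_1 + ... + B_I), D)]` with `B_l ~ Exp(μ_l)`, `D ~ Exp(ν)`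
mutually independent. -/
theorem invariant_norm_fixed_point
    {Ω : Type*} [MeasurableSpace Ω] (P : Measure Ω) [IsProbabilityMeasure P]
    (n : ℕ) (lam ν : ℝ) (hlam : 0 < lam) (hν : 0 < ν)
    (μ : Fin (n + 1) → ℝ) (hμ : ∀ i, 0 < μ i)
    (hover : 1 < lam * ∑ i, 1 / μ i)
    (B : Fin (n + 1) → Ω → ℝ) (D : Ω → ℝ)
    (hmB : ∀ l, Measurable (B l)) (hmD : Measurable D)
    (hindep : iIndepFun
      (Fin.cons D B : Fin (n + 2) → Ω → ℝ) P)
    (hB : ∀ l, Measure.map (B l) P = expMeasure (μ l))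
    (hD : Measure.map D P = expMeasure ν)
    (z : Fin (n + 1) → ℝ) (hz : ∀ i, 0 < z i)
    (heq0 : lam - μ 0 * z 0 / (∑ j, z j) - ν * z 0 = 0)
    (heqi : ∀ i : Fin (n + 1), i ≠ 0 →
      μ (i - 1) * z (i - 1) / (∑ j, z j) - μ i * z i / (∑ j, z j) - ν * z i = 0) :
    (∑ j, z j) = lam * ∫ ω, min ((∑ j, z j) * ∑ l, B l ω) (D ω) ∂P :=
  invariant_norm_fixed_point_general P n lam ν hν μ hμ B D hmB hmD hindep hB hD z hz heq0 heqi
end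

section
/- Suppose n : [0,∞) → (0,∞) is measurable and n(t) → n* > 0 as t → ∞. Let B ≥ 0 and D ≥ 0 be random variables with E[D] < ∞, and define f(s,t) = P{B > ∫_s^t du/n(u), D > t−s}. Then ∫_0^t f(s,t) ds → E[min{n* B, D}] as t → ∞. -/
/-!
Substituting `r = t - s` turns the integral into `∫₀ᵗ P{B > ∫_{t-r}^t du/n(u), D > r} dr`.
For fixed `r > 0` the window integral `∫_{t-r}^t du/n(u)` tends to `r/n*`, so the integrand tends
to `P{n* B > r, D > r} = P{min(n* B, D) > r}` at every `r` that is not one of the countably many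
atoms of `n* B`. The integrand is dominated by `P{D > r}`, whose integral over `(0, ∞)` is
`E[D] < ∞`, so dominated convergence and the layer-cake formula for `min(n* B, D)` conclude.
-/

open MeasureTheory Set Filter Topology

theorem tendsto_intervalIntegral_sub_left_atTop {E : Type*} [NormedAddCommGroup E]
    [NormedSpace ℝ E] [CompleteSpace E] {g : ℝ → E} {c : E} (hg : StronglyMeasurable g)
    (hlim : Tendsto g atTop (𝓝 c)) (r : ℝ) :
    Tendsto (fun t => ∫ u in (t - r)..t, g u) atTop (𝓝 (r • c)) := by
  obtain ⟨T, hT⟩ := eventually_atTop.1 (hlim.norm.eventually (gt_mem_nhds (lt_add_one ‖c‖)))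
  have hshift (t : ℝ) : ∫ u in (t - r)..t, g u = ∫ u in (0 : ℝ)..r, g (u + (t - r)) := by
    rw [intervalIntegral.integral_comp_add_right, zero_add, add_sub_cancel]
  simp_rw [hshift]
  rw [show r • c = ∫ _ in (0 : ℝ)..r, c by simp]
  refine intervalIntegral.tendsto_integral_filter_of_dominated_convergence (fun _ => ‖c‖ + 1)
    (.of_forall fun t => (hg.comp_measurable (measurable_add_const _)).aestronglyMeasurable)
    ?_ intervalIntegrable_const (.of_forall fun u _ => hlim.comp ?_)
  · filter_upwards [eventually_ge_atTop (T + |r|)] with t ht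
    refine .of_forall fun u hu => (hT _ ?_).le
    rcases le_total 0 r with h | h
    · rw [uIoc_of_le h] at hu
      linarith [hu.1, le_abs_self r]
    · rw [uIoc_of_ge h] at hu
      linarith [hu.1, abs_of_nonpos h]
  · exact tendsto_atTop_add_const_left _ _ (tendsto_atTop_add_const_right _ _ tendsto_id)

theorem MeasureTheory.StronglyMeasurable.intervalIntegral_lower {E : Type*}
    [NormedAddCommGroup E] [NormedSpace ℝ E] {g : ℝ → E} (hg : StronglyMeasurable g)
    (b : ℝ) :
    StronglyMeasurable fun a => ∫ u in a..b, g u := by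
  have hIoc {lo hi : ℝ → ℝ} (hlo : Measurable lo) (hhi : Measurable hi) :
      StronglyMeasurable fun a => ∫ u in Ioc (lo a) (hi a), g u := by
    simp_rw [← integral_indicator measurableSet_Ioc]
    have hset : MeasurableSet {p : ℝ × ℝ | p.2 ∈ Ioc (lo p.1) (hi p.1)} :=
      (_root_.measurableSet_lt (hlo.comp measurable_fst) measurable_snd).inter
        (_root_.measurableSet_le measurable_snd (hhi.comp measurable_fst))
    refine StronglyMeasurable.integral_prod_right'
      (f := fun p : ℝ × ℝ => (Ioc (lo p.1) (hi p.1)).indicator g p.2) ?_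
    convert (hg.comp_measurable measurable_snd).indicator hset using 1
    ext p
    simp [indicator]
  exact (hIoc measurable_id measurable_const).sub (hIoc measurable_const measurable_id)

theorem tendsto_measure_setOf_lt_of_tendsto {α ι : Type*} [MeasurableSpace α]
    {μ : Measure α} [IsFiniteMeasure μ] {l : Filter ι} [l.IsCountablyGenerated] {X : α → ℝ}
    (hX : Measurable X)
    {a : ι → ℝ} {c : ℝ} (ha : Tendsto a l (𝓝 c)) (hc : μ {ω | X ω = c} = 0) :
    Tendsto (fun i => μ {ω | a i < X ω}) l (𝓝 (μ {ω | c < X ω})) := by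
  refine tendsto_measure_of_ae_tendsto_indicator_of_isFiniteMeasure l
    (measurableSet_lt measurable_const hX) (fun i => measurableSet_lt measurable_const hX) ?_
  filter_upwards [measure_eq_zero_iff_ae_notMem.1 hc] with ω (hω : X ω ≠ c)
  rcases hω.lt_or_gt with h | h
  · filter_upwards [ha.eventually (lt_mem_nhds h)] with i hi
    exact iff_of_false hi.not_gt h.not_gt
  · filter_upwards [ha.eventually (gt_mem_nhds h)] with i hi
    exact iff_of_true hi h

theorem ae_measure_setOf_eq_eq_zero {α : Type*} [MeasurableSpace α] {μ : Measure α} [SFinite μ]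
    {X : α → ℝ} (hX : Measurable X) : ∀ᵐ c, μ {ω | X ω = c} = 0 := by
  filter_upwards [(Measure.countable_meas_level_set_pos (μ := μ) hX).ae_notMem volume]
    with c hc
  exact nonpos_iff_eq_zero.1 (not_lt.1 hc)

theorem integrableOn_Ioi_measureReal_lt {α : Type*} [MeasurableSpace α] {μ : Measure α}
    [IsFiniteMeasure μ] {X : α → ℝ} (hX : Integrable X μ) (hX_nonneg : 0 ≤ᵐ[μ] X) :
    IntegrableOn (fun r => μ.real {ω | r < X ω}) (Ioi 0) := by
  have hanti : Antitone fun r => μ.real {ω | r < X ω} := fun r s hrs =>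
    measureReal_mono (fun ω hω => hrs.trans_lt hω) (measure_ne_top _ _)
  refine ⟨hanti.measurable.aestronglyMeasurable, ?_⟩
  rw [hasFiniteIntegral_iff_ofReal (.of_forall fun r => measureReal_nonneg)]
  simp_rw [ofReal_measureReal (measure_ne_top μ _)]
  rw [← lintegral_eq_lintegral_meas_lt μ hX_nonneg hX.aemeasurable]
  exact hX.lintegral_lt_top

section

variable {Ω : Type*} [MeasurableSpace Ω] {P : Measure Ω} {B D : Ω → ℝ}

theorem measurable_measureReal_setOf_lt_and_lt [SFinite P] {a : ℝ → ℝ} (ha : Measurable a)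
    (hB : Measurable B) (hD : Measurable D) :
    Measurable fun r => P.real {ω | a r < B ω ∧ r < D ω} :=
  (measurable_measure_prodMk_left (ν := P) (s := {p : ℝ × Ω | a p.1 < B p.2 ∧ p.1 < D p.2})
    ((measurableSet_lt (ha.comp measurable_fst) (hB.comp measurable_snd)).inter
      (measurableSet_lt measurable_fst (hD.comp measurable_snd)))).ennreal_toReal

theorem tendsto_measure_setOf_lt_and_lt_min [IsFiniteMeasure P] {ι : Type*} {l : Filter ι}
    [l.IsCountablyGenerated] {a : ι → ℝ} {κ r : ℝ} (hκ : 0 < κ) (ha : Tendsto a l (𝓝 (r / κ)))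
    (hB : Measurable B) (hr : P {ω | κ * B ω = r} = 0) :
    Tendsto (fun i => P {ω | a i < B ω ∧ r < D ω}) l
      (𝓝 (P {ω | r < min (κ * B ω) (D ω)})) := by
  have hX : Measurable fun ω => κ * B ω := hB.const_mul κ
  have key := tendsto_measure_setOf_lt_of_tendsto (μ := P.restrict {ω | r < D ω}) hX
    (mul_div_cancel₀ r hκ.ne' ▸ ha.const_mul κ)
    (nonpos_iff_eq_zero.1 <| (Measure.restrict_apply_le _ _).trans_eq hr)
  simp only [Measure.restrict_apply (measurableSet_lt measurable_const hX)] at key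
  convert key using 3 with i
  · ext ω
    simp [mul_lt_mul_iff_right₀ hκ]
  · ext ω
    simp

theorem tendsto_intervalIntegral_measureReal_lt_and_lt [IsFiniteMeasure P] {A : ℝ → ℝ → ℝ}
    {κ : ℝ} (hκ : 0 < κ) (hA : ∀ t, Measurable (A t))
    (hA_lim : ∀ r, 0 < r → Tendsto (fun t => A t r) atTop (𝓝 (r / κ)))
    (hB : Measurable B) (hD : Measurable D) (hB_nonneg : ∀ ω, 0 ≤ B ω)
    (hD_nonneg : ∀ ω, 0 ≤ D ω) (hD_int : Integrable D P) :
    Tendsto (fun t => ∫ r in (0 : ℝ)..t, P.real {ω | A t r < B ω ∧ r < D ω}) atTop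
      (𝓝 (∫ ω, min (κ * B ω) (D ω) ∂P)) := by
  set F : ℝ → ℝ → ℝ := fun t r => P.real {ω | A t r < B ω ∧ r < D ω}
  have hmin_nonneg (ω : Ω) : 0 ≤ min (κ * B ω) (D ω) :=
    le_min (mul_nonneg hκ.le (hB_nonneg ω)) (hD_nonneg ω)
  have hmin_int : Integrable (fun ω => min (κ * B ω) (D ω)) P :=
    hD_int.mono ((hB.const_mul κ).min hD).aestronglyMeasurable <| .of_forall fun ω => by
      simp [abs_of_nonneg (hmin_nonneg ω), abs_of_nonneg (hD_nonneg ω)]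
  rw [hmin_int.integral_eq_integral_meas_lt (.of_forall hmin_nonneg)]
  refine (tendsto_integral_filter_of_dominated_convergence
    (F := fun t => (Ioc 0 t).indicator (F t)) (fun r => P.real {ω | r < D ω}) ?_ ?_
    (integrableOn_Ioi_measureReal_lt hD_int (.of_forall hD_nonneg)) ?_).congr' ?_
  · exact .of_forall fun t =>
      ((measurable_measureReal_setOf_lt_and_lt (hA t) hB hD).indicator
        measurableSet_Ioc).aestronglyMeasurable
  · refine .of_forall fun t => .of_forall fun r => ?_
    rw [Real.norm_of_nonneg (indicator_nonneg (fun _ _ => measureReal_nonneg) _)]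
    exact indicator_apply_le' (fun _ => measureReal_mono fun ω hω => hω.2)
      (fun _ => measureReal_nonneg)
  · filter_upwards [ae_restrict_of_ae (ae_measure_setOf_eq_eq_zero (μ := P) (hB.const_mul κ)),
      ae_restrict_mem measurableSet_Ioi] with r hr (hr0 : 0 < r)
    have hF : Tendsto (fun t => F t r) atTop (𝓝 (P.real {ω | r < min (κ * B ω) (D ω)})) :=
      (ENNReal.tendsto_toReal (measure_ne_top _ _)).comp
        (tendsto_measure_setOf_lt_and_lt_min hκ (hA_lim r hr0) hB hr)
    exact hF.congr' <| (eventually_ge_atTop r).mono fun t ht =>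
      (indicator_of_mem (show r ∈ Ioc 0 t from ⟨hr0, ht⟩) _).symm
  · filter_upwards [eventually_ge_atTop 0] with t ht
    rw [intervalIntegral.integral_of_le ht, setIntegral_indicator measurableSet_Ioc,
      inter_eq_self_of_subset_right Ioc_subset_Ioi_self]

end

theorem layered_integral_tendsto_general
    {Ω : Type*} [MeasurableSpace Ω] (P : Measure Ω) [IsProbabilityMeasure P]
    (nf : ℝ → ℝ) (hmn : Measurable nf)
    (nstar : ℝ) (hnstar : 0 < nstar) (hlim : Tendsto nf atTop (nhds nstar))
    (B D : Ω → ℝ) (hmB : Measurable B) (hmD : Measurable D)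
    (hBnn : ∀ ω, 0 ≤ B ω) (hDnn : ∀ ω, 0 ≤ D ω)
    (hDint : Integrable D P) :
    Tendsto
      (fun t : ℝ => ∫ s in (0 : ℝ)..t,
        (P {ω | (∫ u in s..t, 1 / nf u) < B ω ∧ t - s < D ω}).toReal)
      atTop (nhds (∫ ω, min (nstar * B ω) (D ω) ∂P)) := by
  have hinv : Tendsto (fun u => 1 / nf u) atTop (𝓝 (1 / nstar)) := by
    simpa only [one_div] using hlim.inv₀ hnstar.ne'
  have hg : StronglyMeasurable fun u => 1 / nf u := (hmn.const_div 1).stronglyMeasurable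
  have hA (t : ℝ) : Measurable fun r => ∫ u in (t - r)..t, 1 / nf u :=
    (hg.intervalIntegral_lower t).measurable.comp (measurable_const.sub measurable_id)
  have hA_lim (r : ℝ) :
      Tendsto (fun t => ∫ u in (t - r)..t, 1 / nf u) atTop (𝓝 (r / nstar)) := by
    simpa [div_eq_mul_inv] using tendsto_intervalIntegral_sub_left_atTop hg hinv r
  refine (tendsto_intervalIntegral_measureReal_lt_and_lt hnstar hA (fun r _ => hA_lim r)
    hmB hmD hBnn hDnn hDint).congr fun t => ?_
  simpa only [sub_sub_cancel, sub_self, sub_zero, measureReal_def] using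
    (intervalIntegral.integral_comp_sub_left (a := 0) (b := t)
      (fun r => P.real {ω | (∫ u in (t - r)..t, 1 / nf u) < B ω ∧ r < D ω}) t).symm

/-- if `n : [0,∞) → (0,∞)` is measurable with `n(t) → n* > 0`, and
`B, D ≥ 0` are random variables with `E[D] < ∞`, then with
`f(s,t) = P{B > ∫_s^t du/n(u), D > t−s}` one has
`∫_0^t f(s,t) ds → E[min(n* B, D)]` as `t → ∞`. -/
theorem layered_integral_tendsto
    {Ω : Type*} [MeasurableSpace Ω] (P : Measure Ω) [IsProbabilityMeasure P]
    (nf : ℝ → ℝ) (hmn : Measurable nf) (hnpos : ∀ t, 0 ≤ t → 0 < nf t)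
    (nstar : ℝ) (hnstar : 0 < nstar) (hlim : Tendsto nf atTop (nhds nstar))
    (B D : Ω → ℝ) (hmB : Measurable B) (hmD : Measurable D)
    (hBnn : ∀ ω, 0 ≤ B ω) (hDnn : ∀ ω, 0 ≤ D ω)
    (hDint : Integrable D P) :
    Tendsto
      (fun t : ℝ => ∫ s in (0 : ℝ)..t,
        (P {ω | (∫ u in s..t, 1 / nf u) < B ω ∧ t - s < D ω}).toReal)
      atTop (nhds (∫ ω, min (nstar * B ω) (D ω) ∂P)) :=
  layered_integral_tendsto_general P nf hmn nstar hnstar hlim B D hmB hmD hBnn hDnn hDint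
end
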